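/- arXiv:2105.01025 — 8 statements merged into one kernel-verified Lean document; each statement's English description precedes it below -/
import Mathlib

section
/- Let K_0, …, K_3 and K_{0̂}, …, K_{3̂} be matrices in M_N(ℂ); define the operators k_μ = {K_μ, ·}_{e_μ} and x_μ = {K_{μ̂}, ·}_{e_{μ̂}} on M_N(ℂ), and let D = Σ_μ ( γ^μ ⊗ k_μ + γ^{μ̂} ⊗ x_μ ) acting on ℂ^k ⊗ M_N(ℂ). Then D² = Σ_{μ,ν} η^{μν} 1_k ⊗ (k_μ ∘ k_ν) + (1/2) Σ_{μ,ν} γ^μ γ^ν ⊗ [k_μ, k_ν] − det(η) Σ_μ e_μ 1_k ⊗ (x_μ ∘ x_μ) + Σ_{μ<ν} t_{μν} γ^μ γ^ν ⊗ [x_μ, x_ν] + (1/2) Σ_{μ,ν,σ,α} s_{μνασ} γ^α γ^σ ⊗ {x_ν, k_μ} + Σ_μ (−1)^μ (γ^0 γ^1 γ^2 γ^3) ⊗ [k_μ, x_μ], where s_{μνασ} = e_μ (−1)^μ sgn(ν−μ) sgn(σ−α) δ_{μνασ}, t_{μν} = (−1)^{1+|μ−ν|} Σ_{λ<ρ} δ_{μνλρ}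 e_λ e_ρ, and det(η) = e_0 e_1 e_2 e_3. (Paper: Lemma 3.2, the 'fuzzy Lichnerowicz formula'.) -/
open Matrix

noncomputable section

/-- `δ_{μνασ}`: 1 if the four indices are pairwise distinct, 0 otherwise. -/
def delta4 (μ ν α σ : Fin 4) : ℂ :=
  if μ ≠ ν ∧ μ ≠ α ∧ μ ≠ σ ∧ ν ≠ α ∧ ν ≠ σ ∧ α ≠ σ then 1 else 0

/-- The sign `s_{μνασ} = e_μ (−1)^μ sgn(ν−μ) sgn(σ−α) δ_{μνασ}`. -/
def sSign (e : Fin 4 → ℂ) (μ ν α σ : Fin 4) : ℂ :=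
  e μ * (-1 : ℂ) ^ (μ : ℕ) * (((ν : ℤ) - (μ : ℤ)).sign : ℂ) *
    (((σ : ℤ) - (α : ℤ)).sign : ℂ) * delta4 μ ν α σ

/-- The sign `t_{μν} = (−1)^{1+|μ−ν|} Σ_{λ<ρ} δ_{μνλρ} e_λ e_ρ`. -/
def tSign (e : Fin 4 → ℂ) (μ ν : Fin 4) : ℂ :=
  (-1 : ℂ) ^ (1 + ((μ : ℤ) - (ν : ℤ)).natAbs) *
    ∑ lam : Fin 4, ∑ rho : Fin 4,
      if (lam : ℕ) < (rho : ℕ) then delta4 μ ν lam rho * e lam * e rho else 0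

/-- The operator `g ⊗ T` on `ℂ^k ⊗ M_m(ℂ) ≅ (Fin k → M_m(ℂ))`. -/
def matOp {k : ℕ} {V : Type*} [AddCommGroup V] [Module ℂ V]
    (g : Matrix (Fin k) (Fin k) ℂ) (T : Module.End ℂ V) :
    Module.End ℂ (Fin k → V) where
  toFun f i := ∑ j, g i j • T (f j)
  map_add' f h := by
    funext i
    simp [map_add, smul_add, Finset.sum_add_distrib]
  map_smul' c f := by
    funext i
    simp only [Pi.smul_apply, _root_.map_smul, RingHom.id_apply]
    rw [Finset.smul_sum]
    exact Finset.sum_congr rfl fun j _ => smul_comm _ _ _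

/-- The generalized (anti-)commutator `{M, ·}_e : T ↦ M T + e T M`. -/
def brkt {m : ℕ} (M : Matrix (Fin m) (Fin m) ℂ) (e : ℂ) :
    Module.End ℂ (Matrix (Fin m) (Fin m) ℂ) :=
  LinearMap.mulLeft ℂ M + e • LinearMap.mulRight ℂ M

/-! The matrices `γ^{μ̂}` again satisfy Clifford relations, with metric `-det(η) η`, since up to
sign they are `γ⁵ γ^μ`. Expanding `D²` gives four blocks `Σ g_i g_j ⊗ T_i T_j`. For each of the two
diagonal blocks the anticommutation relations split `g_i g_j` into its symmetric part `η_{ij}` and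
its antisymmetric part, which pairs with the commutator `[T_i, T_j]`; in the hatted block the
antisymmetric part `γ^{μ̂} γ^{ν̂}` is `t_{μν} γ^μ γ^ν`. In the two mixed blocks `γ^μ` and `γ^{ν̂}`
commute for `μ ≠ ν`, and their product is then `± e_μ γ^α γ^σ` (`{α, σ}` the two remaining
indices), which gives the anticommutators weighted by `s`; for `μ = ν` they anticommute with
product `± γ⁵`, which gives the commutators `[k_μ, x_μ]`. Every identity between products of
gamma matrices is a finite normal-ordering computation. -/

structure IsCliffordFamily {ι R A : Type*} [CommRing R] [Ring A] [Algebra R A]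
    (γ : ι → A) (e : ι → R) : Prop where
  mul_self : ∀ i, γ i * γ i = e i • (1 : A)
  anticomm : ∀ i j, i ≠ j → γ i * γ j = -(γ j * γ i)

namespace IsCliffordFamily

variable {ι R A : Type*} [CommRing R] [Ring A] [Algebra R A] {γ : ι → A} {e : ι → R}

theorem mul_add_mul (h : IsCliffordFamily γ e) (i j : ι) [Decidable (i = j)] :
    γ i * γ j + γ j * γ i = (2 * if i = j then e i else 0) • (1 : A) := by
  split_ifs with hij
  · rw [hij, h.mul_self, ← two_smul R, smul_smul]
  · rw [h.anticomm i j hij, neg_add_cancel, mul_zero, zero_smul]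

theorem of_mul_add_mul {K : Type*} [Field K] [NeZero (2 : K)] [Algebra K A] {e : ι → K}
    [DecidableEq ι]
    (h : ∀ i j, γ i * γ j + γ j * γ i = (2 * if i = j then e i else 0) • (1 : A)) :
    IsCliffordFamily γ e where
  mul_self i := by
    have hi := h i i
    rw [if_pos rfl, ← two_smul K, mul_smul] at hi
    exact smul_right_injective A two_ne_zero hi
  anticomm i j hij := by
    have hij' := h i j
    rw [if_neg hij, mul_zero, zero_smul] at hij'
    exact eq_neg_of_add_eq_zero_left hij'

theorem mul_self_mul (h : IsCliffordFamily γ e) (i : ι) (x : A) :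
    γ i * (γ i * x) = e i • x := by
  rw [← mul_assoc, h.mul_self, smul_mul_assoc, one_mul]

theorem anticomm_of_lt [LinearOrder ι] (h : IsCliffordFamily γ e) {i j : ι} (hji : j < i) :
    γ i * γ j = -(γ j * γ i) :=
  h.anticomm i j hji.ne'

theorem mul_mul_swap_of_lt [LinearOrder ι] (h : IsCliffordFamily γ e) {i j : ι} (hji : j < i)
    (x : A) : γ i * (γ j * x) = -(γ j * (γ i * x)) := by
  rw [← mul_assoc, h.anticomm_of_lt hji, neg_mul, mul_assoc]

end IsCliffordFamily

def gammaHat {A : Type*} [Mul A] (γ : Fin 4 → A) : Fin 4 → A :=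
  ![γ 1 * γ 2 * γ 3, γ 0 * γ 2 * γ 3, γ 0 * γ 1 * γ 3, γ 0 * γ 1 * γ 2]

section FourDim

variable {R A : Type*} [CommRing R] [Ring A] [Algebra R A] {γ : Fin 4 → A} {e : Fin 4 → R}

theorem isCliffordFamily_gammaHat (h : IsCliffordFamily γ e) (he : ∀ μ, e μ ^ 2 = 1) :
    IsCliffordFamily (gammaHat γ) (fun μ => -(e 0 * e 1 * e 2 * e 3) * e μ) := by
  constructor
  · intro μ
    -- normal ordering: sort each product of `γ`s by index, cancelling squares on the way
    fin_cases μ <;>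
      simp (disch := decide) only [gammaHat, Fin.zero_eta, Fin.mk_one, Fin.reduceFinMk,
        Matrix.cons_val, mul_assoc, h.mul_self, h.mul_self_mul, h.mul_mul_swap_of_lt, neg_mul,
        mul_neg, neg_neg, mul_smul_comm, smul_neg, smul_smul] <;>
      rw [neg_smul] <;> congr 2 <;> ring_nf <;> simp only [he, mul_one]
  · intro μ ν hμν
    fin_cases μ <;> fin_cases ν <;> (try exact absurd rfl hμν) <;>
      simp (disch := decide) only [gammaHat, Fin.zero_eta, Fin.mk_one, Fin.reduceFinMk,
        Matrix.cons_val, mul_assoc, h.mul_self, h.mul_self_mul, h.anticomm_of_lt,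
        h.mul_mul_swap_of_lt, mul_neg, neg_neg, mul_smul_comm, smul_neg, smul_smul]

theorem IsCliffordFamily.mul_gammaHat_self (h : IsCliffordFamily γ e) (μ : Fin 4) :
    γ μ * gammaHat γ μ = (-1 : R) ^ (μ : ℕ) • (γ 0 * γ 1 * γ 2 * γ 3) := by
  fin_cases μ <;>
    simp (disch := decide) only [gammaHat, Fin.zero_eta, Fin.mk_one, Fin.reduceFinMk,
      Matrix.cons_val, mul_assoc, h.anticomm_of_lt, h.mul_mul_swap_of_lt, mul_neg, neg_neg] <;>
    module

theorem IsCliffordFamily.gammaHat_mul_self (h : IsCliffordFamily γ e) (μ : Fin 4) :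
    gammaHat γ μ * γ μ = -((-1 : R) ^ (μ : ℕ) • (γ 0 * γ 1 * γ 2 * γ 3)) := by
  fin_cases μ <;>
    simp (disch := decide) only [gammaHat, Fin.zero_eta, Fin.mk_one, Fin.reduceFinMk,
      Matrix.cons_val, mul_assoc, h.anticomm_of_lt, h.mul_mul_swap_of_lt, mul_neg, neg_neg] <;>
    module

theorem IsCliffordFamily.gammaHat_mul_comm_of_ne (h : IsCliffordFamily γ e) {μ ν : Fin 4}
    (hμν : μ ≠ ν) : gammaHat γ ν * γ μ = γ μ * gammaHat γ ν := by
  fin_cases μ <;> fin_cases ν <;> (try exact absurd rfl hμν) <;>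
    simp (disch := decide) only [gammaHat, Fin.zero_eta, Fin.mk_one, Fin.reduceFinMk,
      Matrix.cons_val, mul_assoc, h.mul_self, h.mul_self_mul, h.anticomm_of_lt,
      h.mul_mul_swap_of_lt, mul_neg, neg_neg]

end FourDim

section FourDimComplex

variable {A : Type*} [Ring A] [Algebra ℂ A] {γ : Fin 4 → A} {e : Fin 4 → ℂ}

theorem IsCliffordFamily.gammaHat_mul_gammaHat_of_lt (h : IsCliffordFamily γ e) {μ ν : Fin 4}
    (hμν : μ < ν) : gammaHat γ μ * gammaHat γ ν = tSign e μ ν • (γ μ * γ ν) := by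
  fin_cases μ <;> fin_cases ν <;> (try exact absurd hμν (by decide)) <;>
    simp (disch := decide) only [gammaHat, Fin.zero_eta, Fin.mk_one, Fin.reduceFinMk,
      Matrix.cons_val, mul_assoc, h.mul_self, h.mul_self_mul, h.anticomm_of_lt,
      h.mul_mul_swap_of_lt, mul_neg, neg_neg, mul_smul_comm, smul_neg, smul_smul, mul_one] <;>
    simp [tSign, Fin.sum_univ_four, delta4] <;> module

theorem IsCliffordFamily.half_sum_sSign_smul (h : IsCliffordFamily γ e) (μ ν : Fin 4) :
    (1 / 2 : ℂ) • ∑ σ, ∑ α, sSign e μ ν α σ • (γ α * γ σ) =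
      if μ = ν then 0 else γ μ * gammaHat γ ν := by
  fin_cases μ <;> fin_cases ν <;>
    simp [sSign, Fin.sum_univ_four, delta4, Int.sign_eq_one_of_pos, Int.sign_eq_neg_one_of_neg] <;>
    simp (disch := decide) only [gammaHat, Matrix.cons_val, mul_assoc, h.mul_self,
      h.mul_self_mul, h.anticomm_of_lt, h.mul_mul_swap_of_lt, mul_neg, neg_neg, mul_smul_comm,
      smul_neg, smul_smul, mul_one] <;>
    module

end FourDimComplex

theorem Finset.sum_sum_eq_two_nsmul_sum_sum_lt {ι M : Type*} [Fintype ι] [LinearOrder ι]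
    [AddCommMonoid M] (F : ι → ι → M) (hdiag : ∀ i, F i i = 0) (hsymm : ∀ i j, F j i = F i j) :
    ∑ i, ∑ j, F i j = 2 • ∑ i, ∑ j, if i < j then F i j else 0 := by
  have hsplit : ∀ i j, F i j = (if i < j then F i j else 0) + (if j < i then F j i else 0) := by
    intro i j
    rcases lt_trichotomy i j with hij | rfl | hij
    · simp [hij, hij.not_gt]
    · simp [hdiag]
    · simp [hij, hij.not_gt, hsymm]
  rw [Finset.sum_congr rfl fun i _ => Finset.sum_congr rfl fun j _ => hsplit i j]
  simp only [Finset.sum_add_distrib]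
  rw [Finset.sum_comm (f := fun i j => if j < i then F j i else 0), two_nsmul]

section MatOp

variable {k : ℕ} {V : Type*} [AddCommGroup V] [Module ℂ V]

theorem matOp_mul_matOp (g g' : Matrix (Fin k) (Fin k) ℂ) (T T' : Module.End ℂ V) :
    matOp g T * matOp g' T' = matOp (g * g') (T * T') := by
  refine LinearMap.ext fun f => funext fun i => ?_
  simp only [Module.End.mul_apply, matOp, LinearMap.coe_mk, AddHom.coe_mk, Matrix.mul_apply,
    map_sum, map_smul, Finset.smul_sum, Finset.sum_smul, smul_smul]
  rw [Finset.sum_comm]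

theorem matOp_smul_left (c : ℂ) (g : Matrix (Fin k) (Fin k) ℂ) (T : Module.End ℂ V) :
    matOp (c • g) T = c • matOp g T := by
  refine LinearMap.ext fun f => funext fun i => ?_
  simp [matOp, Finset.smul_sum, smul_smul]

theorem matOp_smul_right (c : ℂ) (g : Matrix (Fin k) (Fin k) ℂ) (T : Module.End ℂ V) :
    matOp g (c • T) = c • matOp g T := by
  refine LinearMap.ext fun f => funext fun i => ?_
  simp [matOp, Finset.smul_sum, smul_comm c]

theorem matOp_add_left (g g' : Matrix (Fin k) (Fin k) ℂ) (T : Module.End ℂ V) :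
    matOp (g + g') T = matOp g T + matOp g' T := by
  refine LinearMap.ext fun f => funext fun i => ?_
  simp [matOp, add_smul, Finset.sum_add_distrib]

theorem matOp_add_right (g : Matrix (Fin k) (Fin k) ℂ) (T T' : Module.End ℂ V) :
    matOp g (T + T') = matOp g T + matOp g T' := by
  refine LinearMap.ext fun f => funext fun i => ?_
  simp [matOp, smul_add, Finset.sum_add_distrib]

theorem matOp_neg_left (g : Matrix (Fin k) (Fin k) ℂ) (T : Module.End ℂ V) :
    matOp (-g) T = -matOp g T := by
  rw [← neg_one_smul ℂ g, matOp_smul_left]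
  module

theorem matOp_neg_right (g : Matrix (Fin k) (Fin k) ℂ) (T : Module.End ℂ V) :
    matOp g (-T) = -matOp g T := by
  rw [← neg_one_smul ℂ T, matOp_smul_right]
  module

theorem matOp_sub_left (g g' : Matrix (Fin k) (Fin k) ℂ) (T : Module.End ℂ V) :
    matOp (g - g') T = matOp g T - matOp g' T := by
  rw [sub_eq_add_neg, matOp_add_left, matOp_neg_left, ← sub_eq_add_neg]

theorem matOp_sub_right (g : Matrix (Fin k) (Fin k) ℂ) (T T' : Module.End ℂ V) :
    matOp g (T - T') = matOp g T - matOp g T' := by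
  rw [sub_eq_add_neg, matOp_add_right, matOp_neg_right, ← sub_eq_add_neg]

theorem matOp_zero_left (T : Module.End ℂ V) : matOp (0 : Matrix (Fin k) (Fin k) ℂ) T = 0 := by
  rw [← zero_smul ℂ (0 : Matrix (Fin k) (Fin k) ℂ), matOp_smul_left, zero_smul]

theorem matOp_sum_left {ι : Type*} (s : Finset ι) (g : ι → Matrix (Fin k) (Fin k) ℂ)
    (T : Module.End ℂ V) : matOp (∑ i ∈ s, g i) T = ∑ i ∈ s, matOp (g i) T := by
  classical
  induction s using Finset.induction_on with
  | empty => simpa using matOp_zero_left T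
  | insert i s hi ih => rw [Finset.sum_insert hi, Finset.sum_insert hi, matOp_add_left, ih]

theorem matOp_sum_add_mul_self {ι : Type*} [Fintype ι] (g h : ι → Matrix (Fin k) (Fin k) ℂ)
    (S T : ι → Module.End ℂ V) :
    (∑ i, (matOp (g i) (S i) + matOp (h i) (T i))) * ∑ i, (matOp (g i) (S i) + matOp (h i) (T i)) =
      ∑ i, ∑ j, matOp (g i * g j) (S i * S j)
      + ∑ i, ∑ j, (matOp (g i * h j) (S i * T j) + matOp (h j * g i) (T j * S i))
      + ∑ i, ∑ j, matOp (h i * h j) (T i * T j) := by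
  simp only [Finset.sum_mul_sum, add_mul, mul_add, matOp_mul_matOp, Finset.sum_add_distrib]
  rw [Finset.sum_comm (f := fun i j => matOp (h i * g j) (T i * S j))]
  abel

theorem IsCliffordFamily.sum_sum_matOp_mul {ι : Type*} [Fintype ι] [DecidableEq ι]
    {g : ι → Matrix (Fin k) (Fin k) ℂ} {c : ι → ℂ} (hg : IsCliffordFamily g c)
    (T : ι → Module.End ℂ V) :
    ∑ i, ∑ j, matOp (g i * g j) (T i * T j) =
      ∑ i, ∑ j, (if i = j then c i else 0) • matOp 1 (T i * T j)
      + (1 / 2 : ℂ) • ∑ i, ∑ j, matOp (g i * g j) (T i * T j - T j * T i) := by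
  have hpoint : ∀ i j, matOp (g i * g j) (T i * T j) =
      (if i = j then c i else 0) • matOp 1 (T i * T j)
      + (1 / 2 : ℂ) • (matOp (g i * g j) (T i * T j) - matOp (g j * g i) (T i * T j)) := by
    intro i j
    rw [eq_sub_of_add_eq' (hg.mul_add_mul i j), matOp_sub_left, matOp_smul_left]
    module
  have hswap : ∑ i, ∑ j, matOp (g i * g j) (T j * T i) = ∑ i, ∑ j, matOp (g j * g i) (T i * T j) :=
    Finset.sum_comm
  calc ∑ i, ∑ j, matOp (g i * g j) (T i * T j)
      = ∑ i, ∑ j, ((if i = j then c i else 0) • matOp 1 (T i * T j)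
          + (1 / 2 : ℂ) • (matOp (g i * g j) (T i * T j) - matOp (g j * g i) (T i * T j))) :=
        Finset.sum_congr rfl fun i _ => Finset.sum_congr rfl fun j _ => hpoint i j
    _ = _ := by
        simp only [matOp_sub_right, smul_sub, Finset.sum_add_distrib, Finset.sum_sub_distrib, hswap,
          Finset.smul_sum]

end MatOp

section Lichnerowicz

variable {k : ℕ} {V : Type*} [AddCommGroup V] [Module ℂ V]
  {γ : Fin 4 → Matrix (Fin k) (Fin k) ℂ} {e : Fin 4 → ℂ}

theorem IsCliffordFamily.matOp_mul_gammaHat_add (h : IsCliffordFamily γ e) (μ ν : Fin 4)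
    (S T : Module.End ℂ V) :
    matOp (γ μ * gammaHat γ ν) (S * T) + matOp (gammaHat γ ν * γ μ) (T * S) =
      (1 / 2 : ℂ) • ∑ σ, ∑ α, sSign e μ ν α σ • matOp (γ α * γ σ) (T * S + S * T)
      + if μ = ν then (-1 : ℂ) ^ (μ : ℕ) • matOp (γ 0 * γ 1 * γ 2 * γ 3) (S * T - T * S)
        else 0 := by
  have hsum : (1 / 2 : ℂ) • ∑ σ, ∑ α, sSign e μ ν α σ • matOp (γ α * γ σ) (T * S + S * T) =
      matOp (if μ = ν then 0 else γ μ * gammaHat γ ν) (T * S + S * T) := by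
    rw [← h.half_sum_sSign_smul]
    simp only [matOp_smul_left, matOp_sum_left]
  rw [hsum]
  split_ifs with hμν
  · subst hμν
    rw [h.mul_gammaHat_self, h.gammaHat_mul_self, matOp_zero_left, matOp_neg_left,
      matOp_smul_left, matOp_smul_left, matOp_sub_right]
    module
  · rw [h.gammaHat_mul_comm_of_ne hμν, ← matOp_add_right, add_zero, add_comm (T * S)]

theorem IsCliffordFamily.sum_sum_matOp_mul_gammaHat_add (h : IsCliffordFamily γ e)
    (S T : Fin 4 → Module.End ℂ V) :
    ∑ μ, ∑ ν, (matOp (γ μ * gammaHat γ ν) (S μ * T ν) + matOp (gammaHat γ ν * γ μ) (T ν * S μ)) =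
      (1 / 2 : ℂ) • ∑ μ, ∑ ν, ∑ σ, ∑ α, sSign e μ ν α σ • matOp (γ α * γ σ) (T ν * S μ + S μ * T ν)
      + ∑ μ : Fin 4,
          (-1 : ℂ) ^ (μ : ℕ) • matOp (γ 0 * γ 1 * γ 2 * γ 3) (S μ * T μ - T μ * S μ) := by
  simp only [h.matOp_mul_gammaHat_add, Finset.sum_add_distrib, Finset.sum_ite_eq,
    Finset.mem_univ, if_true, Finset.smul_sum]

theorem IsCliffordFamily.half_sum_sum_matOp_gammaHat_mul (h : IsCliffordFamily γ e)
    {c : Fin 4 → ℂ} (hhat : IsCliffordFamily (gammaHat γ) c) (T : Fin 4 → Module.End ℂ V) :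
    (1 / 2 : ℂ) • ∑ μ, ∑ ν, matOp (gammaHat γ μ * gammaHat γ ν) (T μ * T ν - T ν * T μ) =
      ∑ μ : Fin 4, ∑ ν : Fin 4, if (μ : ℕ) < (ν : ℕ) then
        tSign e μ ν • matOp (γ μ * γ ν) (T μ * T ν - T ν * T μ) else 0 := by
  rw [Finset.sum_sum_eq_two_nsmul_sum_sum_lt]
  · rw [two_nsmul, ← two_smul ℂ, smul_smul]
    norm_num only [one_div, inv_mul_cancel₀, one_smul, Fin.lt_def]
    refine Finset.sum_congr rfl fun μ _ => Finset.sum_congr rfl fun ν _ => ?_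
    split_ifs with hμν
    · rw [h.gammaHat_mul_gammaHat_of_lt (Fin.lt_def.mpr hμν), matOp_smul_left]
    · rfl
  · intro μ
    rw [matOp_sub_right, sub_self]
  · intro μ ν
    rcases eq_or_ne μ ν with rfl | hμν
    · rfl
    · rw [hhat.anticomm ν μ hμν.symm, matOp_neg_left, ← matOp_neg_right, neg_sub]

end Lichnerowicz

theorem stmt3_general (p k N : ℕ)
    (e : Fin 4 → ℂ) (he : ∀ μ, e μ = if (μ : ℕ) < p then 1 else -1)
    (γ : Fin 4 → Matrix (Fin k) (Fin k) ℂ)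
    (hCl : ∀ μ ν, γ μ * γ ν + γ ν * γ μ =
      (2 * if μ = ν then e μ else 0) • (1 : Matrix (Fin k) (Fin k) ℂ))
    (γh : Fin 4 → Matrix (Fin k) (Fin k) ℂ)
    (hγh0 : γh 0 = γ 1 * γ 2 * γ 3) (hγh1 : γh 1 = γ 0 * γ 2 * γ 3)
    (hγh2 : γh 2 = γ 0 * γ 1 * γ 3) (hγh3 : γh 3 = γ 0 * γ 1 * γ 2)
    (kop xop : Fin 4 → Module.End ℂ (Matrix (Fin N) (Fin N) ℂ))
    (D : Module.End ℂ (Fin k → Matrix (Fin N) (Fin N) ℂ))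
    (hD : D = ∑ μ, (matOp (γ μ) (kop μ) + matOp (γh μ) (xop μ))) :
    D * D =
      (∑ μ, ∑ ν, (if μ = ν then e μ else 0) • matOp 1 (kop μ * kop ν))
      + (1 / 2 : ℂ) • (∑ μ, ∑ ν, matOp (γ μ * γ ν) (kop μ * kop ν - kop ν * kop μ))
      - (e 0 * e 1 * e 2 * e 3) • (∑ μ, e μ • matOp 1 (xop μ * xop μ))
      + (∑ μ : Fin 4, ∑ ν : Fin 4, if (μ : ℕ) < (ν : ℕ) then
          tSign e μ ν • matOp (γ μ * γ ν) (xop μ * xop ν - xop ν * xop μ) else 0)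
      + (1 / 2 : ℂ) • (∑ μ : Fin 4, ∑ ν : Fin 4, ∑ σ : Fin 4, ∑ α : Fin 4,
          sSign e μ ν α σ • matOp (γ α * γ σ) (xop ν * kop μ + kop μ * xop ν))
      + (∑ μ : Fin 4, ((-1 : ℂ) ^ (μ : ℕ)) •
          matOp (γ 0 * γ 1 * γ 2 * γ 3) (kop μ * xop μ - xop μ * kop μ)) := by
  have hγ : IsCliffordFamily γ e := .of_mul_add_mul hCl
  have he_sq : ∀ μ, e μ ^ 2 = 1 := fun μ => by rw [he]; split_ifs <;> norm_num
  have hhat := isCliffordFamily_gammaHat hγ he_sq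
  obtain rfl : γh = gammaHat γ := by funext μ; fin_cases μ <;> assumption
  rw [hD, matOp_sum_add_mul_self, hγ.sum_sum_matOp_mul, hγ.sum_sum_matOp_mul_gammaHat_add,
    hhat.sum_sum_matOp_mul, hγ.half_sum_sum_matOp_gammaHat_mul hhat]
  simp only [ite_smul, zero_smul, Finset.sum_ite_eq, Finset.mem_univ, if_true, mul_smul,
    neg_smul, Finset.smul_sum, Finset.sum_neg_distrib]
  abel

theorem stmt3 (p q k N : ℕ) (hpq : p + q = 4) (hk : 1 ≤ k) (hN : 1 ≤ N)
    (e : Fin 4 → ℂ) (he : ∀ μ, e μ = if (μ : ℕ) < p then 1 else -1)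
    (γ : Fin 4 → Matrix (Fin k) (Fin k) ℂ)
    (hCl : ∀ μ ν, γ μ * γ ν + γ ν * γ μ =
      (2 * if μ = ν then e μ else 0) • (1 : Matrix (Fin k) (Fin k) ℂ))
    (hAdj : ∀ μ, (γ μ)ᴴ = e μ • γ μ)
    (γh : Fin 4 → Matrix (Fin k) (Fin k) ℂ)
    (hγh0 : γh 0 = γ 1 * γ 2 * γ 3) (hγh1 : γh 1 = γ 0 * γ 2 * γ 3)
    (hγh2 : γh 2 = γ 0 * γ 1 * γ 3) (hγh3 : γh 3 = γ 0 * γ 1 * γ 2)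
    (eh : Fin 4 → ℂ) (heh : ∀ μ, eh μ = (-1 : ℂ) ^ (q + 1) * e μ)
    (K Kh : Fin 4 → Matrix (Fin N) (Fin N) ℂ)
    (kop xop : Fin 4 → Module.End ℂ (Matrix (Fin N) (Fin N) ℂ))
    (hkop : ∀ μ, kop μ = brkt (K μ) (e μ))
    (hxop : ∀ μ, xop μ = brkt (Kh μ) (eh μ))
    (D : Module.End ℂ (Fin k → Matrix (Fin N) (Fin N) ℂ))
    (hD : D = ∑ μ, (matOp (γ μ) (kop μ) + matOp (γh μ) (xop μ))) :
    D * D =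
      (∑ μ, ∑ ν, (if μ = ν then e μ else 0) • matOp 1 (kop μ * kop ν))
      + (1 / 2 : ℂ) • (∑ μ, ∑ ν, matOp (γ μ * γ ν) (kop μ * kop ν - kop ν * kop μ))
      - (e 0 * e 1 * e 2 * e 3) • (∑ μ, e μ • matOp 1 (xop μ * xop μ))
      + (∑ μ : Fin 4, ∑ ν : Fin 4, if (μ : ℕ) < (ν : ℕ) then
          tSign e μ ν • matOp (γ μ * γ ν) (xop μ * xop ν - xop ν * xop μ) else 0)
      + (1 / 2 : ℂ) • (∑ μ : Fin 4, ∑ ν : Fin 4, ∑ σ : Fin 4, ∑ α : Fin 4,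
          sSign e μ ν α σ • matOp (γ α * γ σ) (xop ν * kop μ + kop μ * xop ν))
      + (∑ μ : Fin 4, ((-1 : ℂ) ^ (μ : ℕ)) •
          matOp (γ 0 * γ 1 * γ 2 * γ 3) (kop μ * xop μ - xop μ * kop μ)) :=
  stmt3_general p k N e he γ hCl γh hγh0 hγh1 hγh2 hγh3 kop xop D hD
end
end

section
/- Let K_0, …, K_3 ∈ M_N(ℂ) satisfy K_μ* = e_μ K_μ, and let D be the operator on H with D(v⊗Y⊗ψ) = Σ_μ γ^μ v ⊗ (K_μ Y + e_μ Y K_μ) ⊗ ψ. Let ω = Σ_j ρ(W_j⊗a_j) ∘ ( D ∘ ρ(T_j⊗c_j) − ρ(T_j⊗c_j) ∘ D ) be a finite sum with W_j, T_j ∈ M_N(ℂ) and a_j, c_j ∈ M_n(ℂ), and assume ω is self-adjoint. Then there exist matrices 𝖠_0, …, 𝖠_3 ∈ M_{Nn}(ℂ) with 𝖠_μ* = e_μ 𝖠_μ such that for all v, Y, ψ: (D + ω + J∘ω∘J^{−1})(v⊗Y⊗ψ) = Σ_μ γ^μ v ⊗ ( (K_μ⊗1_n + 𝖠_μ)(Y⊗ψ)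 + e_μ (Y⊗ψ)(K_μ⊗1_n + 𝖠_μ) ). (Paper: Lemma 4.3, fluctuations with respect to the K_μ-matrices.) -/
open Matrix
open scoped Kronecker

noncomputable section

/-- The pure tensor `v ⊗ M` in `ℂ^k ⊗ M_{Nn}(ℂ) ≅ (Fin k → M_{Nn}(ℂ))`. -/
def pt {k : ℕ} {ι : Type*} (v : Fin k → ℂ) (M : Matrix ι ι ℂ) :
    Fin k → Matrix ι ι ℂ :=
  fun i => v i • M

/-- The representation `ρ(P)` acting by left multiplication by `P` on the matrix factor. -/
def rho {k : ℕ} {ι : Type*} [Fintype ι] (P : Matrix ι ι ℂ) :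
    Module.End ℂ (Fin k → Matrix ι ι ℂ) :=
  (LinearMap.mulLeft ℂ P).compLeft (Fin k)

/-- The inner product `⟨v⊗Y⊗ψ, w⊗Z⊗χ⟩ = ⟨v,w⟩ Tr(Y*Z) Tr(ψ*χ)` on
`H = ℂ^k ⊗ M_N(ℂ) ⊗ M_n(ℂ) ≅ (Fin k → M_{Nn}(ℂ))`. -/
def inn {k : ℕ} {ι : Type*} [Fintype ι] (f g : Fin k → Matrix ι ι ℂ) : ℂ :=
  ∑ i, Matrix.trace ((f i)ᴴ * g i)

/-!
On a pure tensor `v ⊗ M` the Dirac operator and both fluctuation terms have the form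
`∑_μ γ^μ v ⊗ X_μ(M)`. The commutator `[D, ρ(S)]` only sees the left-multiplication part
`K_μ ⊗ 1` of `D`, so `ω (v ⊗ M) = ∑_μ γ^μ v ⊗ 𝖠_μ M` with
`𝖠_μ = ∑_j (W_j ⊗ a_j) [K_μ ⊗ 1, T_j ⊗ c_j]`, and conjugation by `J` turns left multiplication
by `𝖠_μ` into right multiplication by `𝖠_μ*`. Pairing `ω` against pure tensors, its
self-adjointness says `∑_μ tr(M* (e_μ 𝖠_μ* - 𝖠_μ) M') γ^μ = 0`; the Clifford relations make the
`γ^μ` orthogonal for the trace form, hence linearly independent, so `e_μ 𝖠_μ* = 𝖠_μ`.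
-/

namespace Matrix

@[elab_as_elim]
theorem kronecker_induction {R l m n p : Type*} [Semiring R] [Finite l] [Finite m] [Finite n]
    [Finite p] {P : Matrix (l × n) (m × p) R → Prop} (M : Matrix (l × n) (m × p) R)
    (zero : P 0) (add : ∀ X Y, P X → P Y → P (X + Y))
    (kronecker : ∀ (A : Matrix l m R) (B : Matrix n p R), P (A ⊗ₖ B)) : P M := by
  classical
  refine M.induction_on' zero add fun ⟨i₁, i₂⟩ ⟨j₁, j₂⟩ x => ?_
  simpa only [single_kronecker_single, mul_one] using kronecker (single i₁ j₁ x) (single i₂ j₂ 1)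

section Anticommutator

variable {𝕜 m κ : Type*} [Field 𝕜] [CharZero 𝕜] [Fintype m] [DecidableEq m] [DecidableEq κ]
  {γ : κ → Matrix m m 𝕜} {e : κ → 𝕜}

theorem trace_mul_of_anticommutator
    (hCl : ∀ μ ν, γ μ * γ ν + γ ν * γ μ = (2 * if μ = ν then e μ else 0) • (1 : Matrix m m 𝕜))
    (μ ν : κ) : trace (γ μ * γ ν) = (if μ = ν then e μ else 0) * Fintype.card m := by
  have h := congrArg trace (hCl μ ν)
  rw [trace_add, trace_mul_comm (γ ν), trace_smul, trace_one, smul_eq_mul, ← two_mul] at h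
  exact mul_left_cancel₀ two_ne_zero (h.trans (mul_assoc _ _ _))

theorem linearIndependent_of_anticommutator [Fintype κ] [Nonempty m]
    (hCl : ∀ μ ν, γ μ * γ ν + γ ν * γ μ = (2 * if μ = ν then e μ else 0) • (1 : Matrix m m 𝕜))
    (he : ∀ μ, e μ ≠ 0) : LinearIndependent 𝕜 γ := by
  refine Fintype.linearIndependent_iff.mpr fun t ht ν => ?_
  have h := congrArg (fun X => trace (X * γ ν)) ht
  simp only [Finset.sum_mul, smul_mul, zero_mul, trace_sum, trace_smul, trace_zero, smul_eq_mul,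
    trace_mul_of_anticommutator hCl] at h
  simpa [he ν, Fintype.card_ne_zero] using h

end Anticommutator

end Matrix

section PureTensor

variable {k : ℕ} {ι : Type*}

@[simp]
theorem pt_zero (v : Fin k → ℂ) : pt v (0 : Matrix ι ι ℂ) = 0 :=
  funext fun _ => smul_zero _

theorem pt_add (v : Fin k → ℂ) (M M' : Matrix ι ι ℂ) : pt v (M + M') = pt v M + pt v M' :=
  funext fun _ => smul_add _ _ _

theorem pt_sub (v : Fin k → ℂ) (M M' : Matrix ι ι ℂ) : pt v (M - M') = pt v M - pt v M' :=
  funext fun _ => smul_sub _ _ _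

theorem pt_sum {τ : Type*} (s : Finset τ) (v : Fin k → ℂ) (M : τ → Matrix ι ι ℂ) :
    pt v (∑ j ∈ s, M j) = ∑ j ∈ s, pt v (M j) := by
  funext i
  simp only [pt, Finset.smul_sum, Finset.sum_apply]

variable [Fintype ι]

theorem rho_pt (P : Matrix ι ι ℂ) (v : Fin k → ℂ) (M : Matrix ι ι ℂ) :
    rho P (pt v M) = pt v (P * M) :=
  funext fun _ => Matrix.mul_smul _ _ _

theorem inn_pt (v w : Fin k → ℂ) (M M' : Matrix ι ι ℂ) :
    inn (pt v M) (pt w M') = (star v ⬝ᵥ w) * trace (Mᴴ * M') := by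
  simp only [inn, pt, conjTranspose_smul, smul_mul, Matrix.mul_smul, trace_smul, smul_eq_mul,
    dotProduct, Finset.sum_mul, Pi.star_apply, mul_assoc]
  exact Finset.sum_congr rfl fun _ _ => mul_left_comm _ _ _

theorem inn_sum_left {τ : Type*} (s : Finset τ) (f : τ → Fin k → Matrix ι ι ℂ)
    (g : Fin k → Matrix ι ι ℂ) : inn (∑ j ∈ s, f j) g = ∑ j ∈ s, inn (f j) g := by
  simp only [inn, Finset.sum_apply, conjTranspose_sum, Matrix.sum_mul, trace_sum]
  exact Finset.sum_comm

theorem inn_sum_right {τ : Type*} (s : Finset τ) (g : Fin k → Matrix ι ι ℂ)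
    (f : τ → Fin k → Matrix ι ι ℂ) : inn g (∑ j ∈ s, f j) = ∑ j ∈ s, inn g (f j) := by
  simp only [inn, Finset.sum_apply, Matrix.mul_sum, trace_sum]
  exact Finset.sum_comm

end PureTensor

section GammaSum

variable {k : ℕ} {ι κ : Type*} [Fintype κ] (γ : κ → Matrix (Fin k) (Fin k) ℂ)

def gammaSum (v : Fin k → ℂ) (X : κ → Matrix ι ι ℂ) : Fin k → Matrix ι ι ℂ :=
  ∑ μ, pt (γ μ *ᵥ v) (X μ)

theorem gammaSum_add (v : Fin k → ℂ) (X X' : κ → Matrix ι ι ℂ) :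
    gammaSum γ v (fun μ => X μ + X' μ) = gammaSum γ v X + gammaSum γ v X' := by
  simp only [gammaSum, pt_add, Finset.sum_add_distrib]

theorem gammaSum_sub (v : Fin k → ℂ) (X X' : κ → Matrix ι ι ℂ) :
    gammaSum γ v (fun μ => X μ - X' μ) = gammaSum γ v X - gammaSum γ v X' := by
  simp only [gammaSum, pt_sub, Finset.sum_sub_distrib]

theorem gammaSum_sum {τ : Type*} (s : Finset τ) (v : Fin k → ℂ) (X : τ → κ → Matrix ι ι ℂ) :
    gammaSum γ v (fun μ => ∑ j ∈ s, X j μ) = ∑ j ∈ s, gammaSum γ v (X j) := by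
  simp only [gammaSum, pt_sum]
  exact Finset.sum_comm

theorem rho_gammaSum [Fintype ι] (R : Matrix ι ι ℂ) (v : Fin k → ℂ) (X : κ → Matrix ι ι ℂ) :
    rho R (gammaSum γ v X) = gammaSum γ v fun μ => R * X μ := by
  simp only [gammaSum, map_sum, rho_pt]

end GammaSum

section KroneckerExtension

variable {k : ℕ} {l n κ : Type*} [Fintype l] [Fintype n] [Fintype κ]
  (γ : κ → Matrix (Fin k) (Fin k) ℂ)

theorem apply_pt_eq_gammaSum_of_kronecker {D : Module.End ℂ (Fin k → Matrix (l × n) (l × n) ℂ)}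
    {P Q : κ → Matrix (l × n) (l × n) ℂ}
    (hD : ∀ v (Y : Matrix l l ℂ) (ψ : Matrix n n ℂ),
      D (pt v (Y ⊗ₖ ψ)) = gammaSum γ v fun μ => P μ * (Y ⊗ₖ ψ) + (Y ⊗ₖ ψ) * Q μ)
    (v : Fin k → ℂ) (M : Matrix (l × n) (l × n) ℂ) :
    D (pt v M) = gammaSum γ v fun μ => P μ * M + M * Q μ := by
  induction M using Matrix.kronecker_induction with
  | zero => simp [gammaSum]
  | add X Y hX hY =>
    rw [pt_add, map_add, hX, hY, ← gammaSum_add]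
    congr 1
    funext μ
    noncomm_ring
  | kronecker Y ψ => exact hD v Y ψ

theorem apply_pt_eq_pt_conjTranspose_of_kronecker
    {J : (Fin k → Matrix (l × n) (l × n) ℂ) → Fin k → Matrix (l × n) (l × n) ℂ}
    (hJadd : ∀ f g, J (f + g) = J f + J g) {C : (Fin k → ℂ) → Fin k → ℂ}
    (hJ : ∀ v (Y : Matrix l l ℂ) (ψ : Matrix n n ℂ), J (pt v (Y ⊗ₖ ψ)) = pt (C v) (Y ⊗ₖ ψ)ᴴ)
    (v : Fin k → ℂ) (M : Matrix (l × n) (l × n) ℂ) : J (pt v M) = pt (C v) Mᴴ := by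
  induction M using Matrix.kronecker_induction with
  | zero => simpa using (AddMonoidHom.mk' J hJadd).map_zero
  | add X Y hX hY => rw [pt_add, hJadd, hX, hY, conjTranspose_add, pt_add]
  | kronecker Y ψ => exact hJ v Y ψ

end KroneckerExtension

section RealStructure

variable {k : ℕ} {ι κ : Type*} [Fintype κ] {γ : κ → Matrix (Fin k) (Fin k) ℂ}

theorem symm_apply_pt {C : (Fin k → ℂ) ≃ (Fin k → ℂ)}
    {J : (Fin k → Matrix ι ι ℂ) ≃ (Fin k → Matrix ι ι ℂ)}
    (hJ : ∀ v M, J (pt v M) = pt (C v) Mᴴ) (v : Fin k → ℂ) (M : Matrix ι ι ℂ) :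
    J.symm (pt v M) = pt (C.symm v) Mᴴ := by
  rw [J.symm_apply_eq, hJ, C.apply_symm_apply, conjTranspose_conjTranspose]

theorem apply_gammaSum {C : (Fin k → ℂ) → Fin k → ℂ}
    (hCγ : ∀ μ v, C (γ μ *ᵥ v) = γ μ *ᵥ C v)
    {J : (Fin k → Matrix ι ι ℂ) → Fin k → Matrix ι ι ℂ} (hJadd : ∀ f g, J (f + g) = J f + J g)
    (hJ : ∀ v M, J (pt v M) = pt (C v) Mᴴ) (v : Fin k → ℂ) (X : κ → Matrix ι ι ℂ) :
    J (gammaSum γ v X) = gammaSum γ (C v) fun μ => (X μ)ᴴ := by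
  change AddMonoidHom.mk' J hJadd (∑ μ, _) = _
  simp only [map_sum, AddMonoidHom.mk'_apply, hJ, hCγ, gammaSum]

theorem conj_apply_pt [Fintype ι] {C : (Fin k → ℂ) ≃ (Fin k → ℂ)}
    (hCγ : ∀ μ v, C (γ μ *ᵥ v) = γ μ *ᵥ C v)
    {J : (Fin k → Matrix ι ι ℂ) ≃ (Fin k → Matrix ι ι ℂ)} (hJadd : ∀ f g, J (f + g) = J f + J g)
    (hJ : ∀ v M, J (pt v M) = pt (C v) Mᴴ)
    {ω : (Fin k → Matrix ι ι ℂ) → Fin k → Matrix ι ι ℂ} {A : κ → Matrix ι ι ℂ}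
    (hω : ∀ v M, ω (pt v M) = gammaSum γ v fun μ => A μ * M)
    (v : Fin k → ℂ) (M : Matrix ι ι ℂ) :
    J (ω (J.symm (pt v M))) = gammaSum γ v fun μ => M * (A μ)ᴴ := by
  rw [symm_apply_pt hJ, hω, apply_gammaSum hCγ hJadd hJ, C.apply_symm_apply]
  simp only [conjTranspose_mul, conjTranspose_conjTranspose]

end RealStructure

section Fluctuation

variable {k : ℕ} {ι κ : Type*} [Fintype ι] [Fintype κ] {γ : κ → Matrix (Fin k) (Fin k) ℂ}

theorem commutator_rho_apply_pt {D : Module.End ℂ (Fin k → Matrix ι ι ℂ)}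
    {P Q : κ → Matrix ι ι ℂ} (hD : ∀ v M, D (pt v M) = gammaSum γ v fun μ => P μ * M + M * Q μ)
    (S : Matrix ι ι ℂ) (v : Fin k → ℂ) (M : Matrix ι ι ℂ) :
    (D * rho S - rho S * D : Module.End ℂ (Fin k → Matrix ι ι ℂ)) (pt v M) =
      gammaSum γ v fun μ => (P μ * S - S * P μ) * M := by
  rw [LinearMap.sub_apply, Module.End.mul_apply, Module.End.mul_apply, rho_pt, hD, hD,
    rho_gammaSum, ← gammaSum_sub]
  congr 1
  funext μ
  noncomm_ring

theorem oneForm_apply_pt {D : Module.End ℂ (Fin k → Matrix ι ι ℂ)}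
    {P Q : κ → Matrix ι ι ℂ} (hD : ∀ v M, D (pt v M) = gammaSum γ v fun μ => P μ * M + M * Q μ)
    {τ : Type*} [Fintype τ] (R S : τ → Matrix ι ι ℂ) (v : Fin k → ℂ) (M : Matrix ι ι ℂ) :
    (∑ j, rho (R j) * (D * rho (S j) - rho (S j) * D) : Module.End ℂ (Fin k → Matrix ι ι ℂ))
      (pt v M) =
      gammaSum γ v fun μ => (∑ j, R j * (P μ * S j - S j * P μ)) * M := by
  simp only [LinearMap.sum_apply, Module.End.mul_apply, commutator_rho_apply_pt hD,
    rho_gammaSum, Finset.sum_mul, Matrix.mul_assoc, gammaSum_sum]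

theorem smul_conjTranspose_eq_of_inn_symm {e : κ → ℂ} (hγ : LinearIndependent ℂ γ)
    (hAdj : ∀ μ, (γ μ)ᴴ = e μ • γ μ)
    {ω : (Fin k → Matrix ι ι ℂ) → Fin k → Matrix ι ι ℂ} {A : κ → Matrix ι ι ℂ}
    (hω : ∀ v M, ω (pt v M) = gammaSum γ v fun μ => A μ * M)
    (hsa : ∀ f g, inn (ω f) g = inn f (ω g)) (μ : κ) : e μ • (A μ)ᴴ = A μ := by
  classical
  set t : Matrix ι ι ℂ → Matrix ι ι ℂ → κ → ℂ :=
    fun M M' ν => trace (Mᴴ * ((e ν • (A ν)ᴴ - A ν) * M'))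
  have hpair : ∀ v w M M', ∑ ν, (star v ⬝ᵥ γ ν *ᵥ w) * t M M' ν = 0 := by
    intro v w M M'
    have hstar : ∀ ν, star (γ ν *ᵥ v) ⬝ᵥ w = e ν * (star v ⬝ᵥ γ ν *ᵥ w) := fun ν => by
      rw [star_mulVec, ← dotProduct_mulVec, hAdj, smul_mulVec, dotProduct_smul, smul_eq_mul]
    have h := hsa (pt v M) (pt w M')
    simp only [hω, gammaSum, inn_sum_left, inn_sum_right, inn_pt, hstar] at h
    calc ∑ ν, (star v ⬝ᵥ γ ν *ᵥ w) * t M M' ν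
        = ∑ ν, e ν * (star v ⬝ᵥ γ ν *ᵥ w) * trace ((A ν * M)ᴴ * M')
          - ∑ ν, (star v ⬝ᵥ γ ν *ᵥ w) * trace (Mᴴ * (A ν * M')) := by
          rw [← Finset.sum_sub_distrib]
          refine Finset.sum_congr rfl fun ν _ => ?_
          simp only [t, conjTranspose_mul, sub_mul, smul_mul, Matrix.mul_sub, Matrix.mul_smul,
            trace_sub, trace_smul, smul_eq_mul, Matrix.mul_assoc]
          ring
      _ = 0 := sub_eq_zero.mpr h
  have hgamma : ∀ M M', ∑ ν, t M M' ν • γ ν = 0 := by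
    intro M M'
    ext i j
    simpa [mulVec_single_one, Matrix.sum_apply, mul_comm] using
      hpair (Pi.single i 1) (Pi.single j 1) M M'
  have ht : ∀ M', t 1 M' μ = 0 := fun M' =>
    Fintype.linearIndependent_iff.mp hγ _ (hgamma 1 M') μ
  refine sub_eq_zero.mp (ext_iff_trace_mul_right.mpr fun M' => ?_)
  simpa [t] using ht M'

end Fluctuation

theorem stmt4_general (p k N n : ℕ) (hk : 1 ≤ k)
    (e : Fin 4 → ℂ) (he : ∀ μ, e μ = if (μ : ℕ) < p then 1 else -1)
    (γ : Fin 4 → Matrix (Fin k) (Fin k) ℂ)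
    (hCl : ∀ μ ν, γ μ * γ ν + γ ν * γ μ =
      (2 * if μ = ν then e μ else 0) • (1 : Matrix (Fin k) (Fin k) ℂ))
    (hAdj : ∀ μ, (γ μ)ᴴ = e μ • γ μ)
    -- the charge conjugation `C`: a conjugate-linear bijection commuting with the γ's
    (C : (Fin k → ℂ) ≃ (Fin k → ℂ))
    (hCγ : ∀ μ v, C ((γ μ).mulVec v) = (γ μ).mulVec (C v))
    -- the matrices `K_μ` with `K_μ* = e_μ K_μ`
    (K : Fin 4 → Matrix (Fin N) (Fin N) ℂ)
    -- the Dirac operator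
    (D : Module.End ℂ (Fin k → Matrix (Fin N × Fin n) (Fin N × Fin n) ℂ))
    (hD : ∀ (v : Fin k → ℂ) (Y : Matrix (Fin N) (Fin N) ℂ) (ψ : Matrix (Fin n) (Fin n) ℂ),
      D (pt v (Y ⊗ₖ ψ)) =
        ∑ μ, pt ((γ μ).mulVec v)
          ((K μ ⊗ₖ (1 : Matrix (Fin n) (Fin n) ℂ)) * (Y ⊗ₖ ψ)
            + e μ • ((Y ⊗ₖ ψ) * (K μ ⊗ₖ (1 : Matrix (Fin n) (Fin n) ℂ)))))
    -- the real structure `J`: a conjugate-linear bijection with `J(v⊗Y⊗ψ) = Cv⊗Y*⊗ψ*`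
    (J : (Fin k → Matrix (Fin N × Fin n) (Fin N × Fin n) ℂ) ≃
      (Fin k → Matrix (Fin N × Fin n) (Fin N × Fin n) ℂ))
    (hJadd : ∀ f g, J (f + g) = J f + J g)
    (hJ : ∀ (v : Fin k → ℂ) (Y : Matrix (Fin N) (Fin N) ℂ) (ψ : Matrix (Fin n) (Fin n) ℂ),
      J (pt v (Y ⊗ₖ ψ)) = pt (C v) (Yᴴ ⊗ₖ ψᴴ))
    -- the Connes one-form `ω`, assumed self-adjoint
    (r : ℕ) (W T : Fin r → Matrix (Fin N) (Fin N) ℂ)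
    (a c : Fin r → Matrix (Fin n) (Fin n) ℂ)
    (ω : Module.End ℂ (Fin k → Matrix (Fin N × Fin n) (Fin N × Fin n) ℂ))
    (hω : ω = ∑ j, rho (W j ⊗ₖ a j) *
      (D * rho (T j ⊗ₖ c j) - rho (T j ⊗ₖ c j) * D))
    (hsa : ∀ f g, inn (ω f) g = inn f (ω g)) :
    ∃ A : Fin 4 → Matrix (Fin N × Fin n) (Fin N × Fin n) ℂ,
      (∀ μ, (A μ)ᴴ = e μ • A μ) ∧
      ∀ (v : Fin k → ℂ) (Y : Matrix (Fin N) (Fin N) ℂ) (ψ : Matrix (Fin n) (Fin n) ℂ),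
        (D + ω) (pt v (Y ⊗ₖ ψ)) + J (ω (J.symm (pt v (Y ⊗ₖ ψ)))) =
          ∑ μ, pt ((γ μ).mulVec v)
            ((K μ ⊗ₖ (1 : Matrix (Fin n) (Fin n) ℂ) + A μ) * (Y ⊗ₖ ψ)
              + e μ • ((Y ⊗ₖ ψ) * (K μ ⊗ₖ (1 : Matrix (Fin n) (Fin n) ℂ) + A μ))) := by
  set P : Fin 4 → Matrix (Fin N × Fin n) (Fin N × Fin n) ℂ := fun μ => K μ ⊗ₖ 1
  set A : Fin 4 → Matrix (Fin N × Fin n) (Fin N × Fin n) ℂ :=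
    fun μ => ∑ j, (W j ⊗ₖ a j) * (P μ * (T j ⊗ₖ c j) - (T j ⊗ₖ c j) * P μ)
  have he2 : ∀ μ, e μ * e μ = 1 := fun μ => by rw [he]; split_ifs <;> norm_num
  have hDpt : ∀ v M, D (pt v M) = gammaSum γ v fun μ => P μ * M + M * (e μ • P μ) :=
    apply_pt_eq_gammaSum_of_kronecker γ fun v Y ψ => by simp only [hD, Matrix.mul_smul]; rfl
  have hJpt : ∀ v M, J (pt v M) = pt (C v) Mᴴ :=
    apply_pt_eq_pt_conjTranspose_of_kronecker hJadd fun v Y ψ => by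
      rw [hJ, conjTranspose_kronecker]
  have hωpt : ∀ v M, ω (pt v M) = gammaSum γ v fun μ => A μ * M := by
    rw [hω]
    exact oneForm_apply_pt hDpt _ _
  have hγ : LinearIndependent ℂ γ :=
    have : Nonempty (Fin k) := ⟨⟨0, hk⟩⟩
    linearIndependent_of_anticommutator hCl fun μ => left_ne_zero_of_mul_eq_one (he2 μ)
  have hA : ∀ μ, (A μ)ᴴ = e μ • A μ := fun μ => by
    conv_rhs => rw [← smul_conjTranspose_eq_of_inn_symm hγ hAdj hωpt hsa μ]
    rw [smul_smul, he2, one_smul]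
  refine ⟨A, hA, fun v Y ψ => ?_⟩
  rw [LinearMap.add_apply, hDpt, hωpt, conj_apply_pt hCγ hJadd hJpt hωpt, ← gammaSum_add,
    ← gammaSum_add]
  refine Finset.sum_congr rfl fun μ _ => congrArg _ ?_
  simp only [hA, add_mul, mul_add, Matrix.mul_smul, smul_add]
  abel

theorem stmt4 (p q k N n : ℕ) (hpq : p + q = 4) (hk : 1 ≤ k) (hN : 1 ≤ N) (hn : 1 ≤ n)
    (e : Fin 4 → ℂ) (he : ∀ μ, e μ = if (μ : ℕ) < p then 1 else -1)
    (γ : Fin 4 → Matrix (Fin k) (Fin k) ℂ)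
    (hCl : ∀ μ ν, γ μ * γ ν + γ ν * γ μ =
      (2 * if μ = ν then e μ else 0) • (1 : Matrix (Fin k) (Fin k) ℂ))
    (hAdj : ∀ μ, (γ μ)ᴴ = e μ • γ μ)
    -- the charge conjugation `C`: a conjugate-linear bijection commuting with the γ's
    (C : (Fin k → ℂ) ≃ (Fin k → ℂ))
    (hCadd : ∀ v w, C (v + w) = C v + C w)
    (hCsmul : ∀ (c : ℂ) v, C (c • v) = (starRingEnd ℂ c) • C v)
    (hCγ : ∀ μ v, C ((γ μ).mulVec v) = (γ μ).mulVec (C v))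
    -- the matrices `K_μ` with `K_μ* = e_μ K_μ`
    (K : Fin 4 → Matrix (Fin N) (Fin N) ℂ)
    (hK : ∀ μ, (K μ)ᴴ = e μ • K μ)
    -- the Dirac operator
    (D : Module.End ℂ (Fin k → Matrix (Fin N × Fin n) (Fin N × Fin n) ℂ))
    (hD : ∀ (v : Fin k → ℂ) (Y : Matrix (Fin N) (Fin N) ℂ) (ψ : Matrix (Fin n) (Fin n) ℂ),
      D (pt v (Y ⊗ₖ ψ)) =
        ∑ μ, pt ((γ μ).mulVec v)
          ((K μ ⊗ₖ (1 : Matrix (Fin n) (Fin n) ℂ)) * (Y ⊗ₖ ψ)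
            + e μ • ((Y ⊗ₖ ψ) * (K μ ⊗ₖ (1 : Matrix (Fin n) (Fin n) ℂ)))))
    -- the real structure `J`: a conjugate-linear bijection with `J(v⊗Y⊗ψ) = Cv⊗Y*⊗ψ*`
    (J : (Fin k → Matrix (Fin N × Fin n) (Fin N × Fin n) ℂ) ≃
      (Fin k → Matrix (Fin N × Fin n) (Fin N × Fin n) ℂ))
    (hJadd : ∀ f g, J (f + g) = J f + J g)
    (hJsmul : ∀ (c : ℂ) f, J (c • f) = (starRingEnd ℂ c) • J f)
    (hJ : ∀ (v : Fin k → ℂ) (Y : Matrix (Fin N) (Fin N) ℂ) (ψ : Matrix (Fin n) (Fin n) ℂ),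
      J (pt v (Y ⊗ₖ ψ)) = pt (C v) (Yᴴ ⊗ₖ ψᴴ))
    -- the Connes one-form `ω`, assumed self-adjoint
    (r : ℕ) (W T : Fin r → Matrix (Fin N) (Fin N) ℂ)
    (a c : Fin r → Matrix (Fin n) (Fin n) ℂ)
    (ω : Module.End ℂ (Fin k → Matrix (Fin N × Fin n) (Fin N × Fin n) ℂ))
    (hω : ω = ∑ j, rho (W j ⊗ₖ a j) *
      (D * rho (T j ⊗ₖ c j) - rho (T j ⊗ₖ c j) * D))
    (hsa : ∀ f g, inn (ω f) g = inn f (ω g)) :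
    ∃ A : Fin 4 → Matrix (Fin N × Fin n) (Fin N × Fin n) ℂ,
      (∀ μ, (A μ)ᴴ = e μ • A μ) ∧
      ∀ (v : Fin k → ℂ) (Y : Matrix (Fin N) (Fin N) ℂ) (ψ : Matrix (Fin n) (Fin n) ℂ),
        (D + ω) (pt v (Y ⊗ₖ ψ)) + J (ω (J.symm (pt v (Y ⊗ₖ ψ)))) =
          ∑ μ, pt ((γ μ).mulVec v)
            ((K μ ⊗ₖ (1 : Matrix (Fin n) (Fin n) ℂ) + A μ) * (Y ⊗ₖ ψ)
              + e μ • ((Y ⊗ₖ ψ) * (K μ ⊗ₖ (1 : Matrix (Fin n) (Fin n) ℂ) + A μ))) :=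
  stmt4_general p k N n hk e he γ hCl hAdj C hCγ K D hD J hJadd hJ r W T a c ω hω hsa
end
end

section
/- Let n₁ > n₂ ≥ 2 be integers, and let G ⊆ U(n₁n₂) be the subgroup consisting of all Kronecker products u₁ ⊗ u₂ with u₁ ∈ U(n₁) and u₂ ∈ U(n₂). Then the quotient of G by its subgroup of unitary scalar multiples of the identity, G / { λ·1_{n₁n₂} : λ ∈ ℂ, |λ| = 1 }, is isomorphic as a group to PU(n₁) × PU(n₂). (Paper: Proposition 4.5, the gauge group of a gauge matrix spectral triple is PU(n₁) × PU(n₂).) -/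
open Matrix
open scoped Kronecker

noncomputable section

lemma conjTranspose_kron {m n : Type*} (A : Matrix m m ℂ) (B : Matrix n n ℂ) :
    (A ⊗ₖ B)ᴴ = Aᴴ ⊗ₖ Bᴴ := by
  ext ⟨i, j⟩ ⟨k, l⟩
  simp [Matrix.conjTranspose_apply, star_mul']

lemma kron_mem_unitary {n₁ n₂ : ℕ}
    {u₁ : Matrix (Fin n₁) (Fin n₁) ℂ} {u₂ : Matrix (Fin n₂) (Fin n₂) ℂ}
    (h₁ : u₁ ∈ Matrix.unitaryGroup (Fin n₁) ℂ) (h₂ : u₂ ∈ Matrix.unitaryGroup (Fin n₂) ℂ) :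
    u₁ ⊗ₖ u₂ ∈ Matrix.unitaryGroup (Fin n₁ × Fin n₂) ℂ := by
  rw [Matrix.mem_unitaryGroup_iff']
  rw [Matrix.mem_unitaryGroup_iff'] at h₁ h₂
  calc star (u₁ ⊗ₖ u₂) * (u₁ ⊗ₖ u₂)
      = (u₁ᴴ ⊗ₖ u₂ᴴ) * (u₁ ⊗ₖ u₂) := by
        rw [Matrix.star_eq_conjTranspose, conjTranspose_kron]
    _ = (u₁ᴴ * u₁) ⊗ₖ (u₂ᴴ * u₂) := (Matrix.mul_kronecker_mul _ _ _ _).symm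
    _ = 1 := by
        rw [← Matrix.star_eq_conjTranspose, ← Matrix.star_eq_conjTranspose, h₁, h₂,
          Matrix.one_kronecker_one]

/-- The homomorphism `U(n₁) × U(n₂) → U(n₁n₂)`, `(u₁, u₂) ↦ u₁ ⊗ₖ u₂`. -/
def kronHom (n₁ n₂ : ℕ) :
    Matrix.unitaryGroup (Fin n₁) ℂ × Matrix.unitaryGroup (Fin n₂) ℂ →*
      Matrix.unitaryGroup (Fin n₁ × Fin n₂) ℂ where
  toFun u := ⟨(u.1 : Matrix (Fin n₁) (Fin n₁) ℂ) ⊗ₖ (u.2 : Matrix (Fin n₂) (Fin n₂) ℂ),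
    kron_mem_unitary u.1.2 u.2.2⟩
  map_one' := by
    apply Subtype.ext
    show ((1 : Matrix.unitaryGroup (Fin n₁) ℂ) : Matrix (Fin n₁) (Fin n₁) ℂ) ⊗ₖ
        ((1 : Matrix.unitaryGroup (Fin n₂) ℂ) : Matrix (Fin n₂) (Fin n₂) ℂ) =
      ((1 : Matrix.unitaryGroup (Fin n₁ × Fin n₂) ℂ) :
        Matrix (Fin n₁ × Fin n₂) (Fin n₁ × Fin n₂) ℂ)
    rw [OneMemClass.coe_one, OneMemClass.coe_one, OneMemClass.coe_one,
      Matrix.one_kronecker_one]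
  map_mul' u v := by
    apply Subtype.ext
    show ((u.1 * v.1 : Matrix.unitaryGroup (Fin n₁) ℂ) : Matrix (Fin n₁) (Fin n₁) ℂ) ⊗ₖ
        ((u.2 * v.2 : Matrix.unitaryGroup (Fin n₂) ℂ) : Matrix (Fin n₂) (Fin n₂) ℂ) = _
    rw [MulMemClass.coe_mul, MulMemClass.coe_mul, Matrix.mul_kronecker_mul]
    rfl

/-- The subgroup of unitary scalar multiples of the identity. -/
def scalars (ι : Type*) [DecidableEq ι] [Fintype ι] :
    Subgroup (Matrix.unitaryGroup ι ℂ) where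
  carrier := {g | ∃ lam : ℂ, ‖lam‖ = 1 ∧ (g : Matrix ι ι ℂ) = lam • 1}
  one_mem' := ⟨1, by simp⟩
  mul_mem' := by
    rintro a b ⟨l, hl, ha⟩ ⟨m, hm, hb⟩
    refine ⟨l * m, by simp [hl, hm], ?_⟩
    push_cast
    rw [ha, hb, smul_mul_smul_comm, one_mul]
  inv_mem' := by
    rintro a ⟨l, hl, ha⟩
    refine ⟨starRingEnd ℂ l, by simpa using hl, ?_⟩
    have : ((a⁻¹ : Matrix.unitaryGroup ι ℂ) : Matrix ι ι ℂ) = star (a : Matrix ι ι ℂ) := rfl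
    rw [this, ha, star_smul, star_one]
    rfl

instance scalars_normal (ι : Type*) [DecidableEq ι] [Fintype ι] : (scalars ι).Normal := by
  constructor
  rintro x ⟨l, hl, hx⟩ g
  refine ⟨l, hl, ?_⟩
  have hg : ((g⁻¹ : Matrix.unitaryGroup ι ℂ) : Matrix ι ι ℂ) = star (g : Matrix ι ι ℂ) := rfl
  push_cast
  rw [hx, hg, Matrix.mul_smul, Matrix.mul_one, Matrix.smul_mul]
  congr 1
  exact (Unitary.mem_iff.mp g.2).2

/-- The projective unitary group `PU(n) = U(n)/U(1)`. -/
def PU (n : ℕ) := Matrix.unitaryGroup (Fin n) ℂ ⧸ scalars (Fin n)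

instance (n : ℕ) : Group (PU n) := QuotientGroup.Quotient.group _

/-!
Both groups are quotients of `U(n₁) × U(n₂)`: the first through `(u₁, u₂) ↦ u₁ ⊗ u₂`, the
second through the two projections to `PU`. The kernels agree because `u₁ ⊗ u₂` is scalar
exactly when `u₁` and `u₂` are: comparing the entries of `u₁ ⊗ u₂ = c • 1` against a nonzero
entry of one factor forces the other factor to be scalar.
-/

theorem ne_zero_of_mem_unitary {R : Type*} [MonoidWithZero R] [StarMul R] [Nontrivial R] {U : R}
    (hU : U ∈ unitary R) : U ≠ 0 := by
  rintro rfl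
  simpa using Unitary.star_mul_self_of_mem hU

namespace Matrix

variable {m n K : Type*} [DecidableEq m] [DecidableEq n] [Field K]

/-- Comparing the entries at `(i, j), (k, l)` for a fixed nonzero entry `B j l` shows
`A i k = (c * δ j l / B j l) * δ i k`. -/
theorem exists_eq_smul_one_left_of_kronecker_eq_smul_one {A : Matrix m m K} {B : Matrix n n K}
    {c : K} (hB : B ≠ 0) (h : A ⊗ₖ B = c • 1) : ∃ a : K, A = a • 1 := by
  obtain ⟨j, l, hjl⟩ : ∃ j l, B j l ≠ 0 := by
    by_contra! hB0
    exact hB (Matrix.ext hB0)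
  refine ⟨c * (1 : Matrix n n K) j l / B j l, ?_⟩
  ext i k
  have hentry := congr_fun₂ h (i, j) (k, l)
  rw [← one_kronecker_one, smul_apply, kroneckerMap_apply, kroneckerMap_apply] at hentry
  rw [smul_apply, smul_eq_mul, div_mul_eq_mul_div, eq_div_iff hjl]
  linear_combination hentry

theorem exists_eq_smul_one_right_of_kronecker_eq_smul_one {A : Matrix m m K} {B : Matrix n n K}
    {c : K} (hA : A ≠ 0) (h : A ⊗ₖ B = c • 1) : ∃ b : K, B = b • 1 := by
  refine exists_eq_smul_one_left_of_kronecker_eq_smul_one hA (A := B) (c := c) ?_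
  ext ⟨j, i⟩ ⟨l, k⟩
  simpa [one_apply, mul_comm, and_comm] using congr_fun₂ h (i, j) (k, l)

end Matrix

theorem norm_eq_one_of_smul_one_mem_unitaryGroup {ι : Type*} [Fintype ι] [DecidableEq ι]
    [Nonempty ι] {a : ℂ} (h : a • (1 : Matrix ι ι ℂ) ∈ Matrix.unitaryGroup ι ℂ) : ‖a‖ = 1 := by
  have hstar : star a * a = 1 := by
    have := Unitary.star_mul_self_of_mem h
    rw [star_smul, star_one, smul_mul_smul, one_mul] at this
    exact smul_left_injective ℂ one_ne_zero (this.trans (one_smul ℂ 1).symm)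
  exact CStarRing.norm_of_mem_unitary (Unitary.mem_iff_star_mul_self.mpr hstar)

theorem mem_scalars_iff {ι : Type*} [DecidableEq ι] [Fintype ι] [Nonempty ι]
    {u : Matrix.unitaryGroup ι ℂ} : u ∈ scalars ι ↔ ∃ a : ℂ, (u : Matrix ι ι ℂ) = a • 1 :=
  ⟨fun ⟨a, _, hu⟩ ↦ ⟨a, hu⟩,
    fun ⟨a, hu⟩ ↦ ⟨a, norm_eq_one_of_smul_one_mem_unitaryGroup (hu ▸ u.2), hu⟩⟩

section kronHom

variable {n₁ n₂ : ℕ}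

@[simp]
theorem coe_kronHom_apply
    (u : Matrix.unitaryGroup (Fin n₁) ℂ × Matrix.unitaryGroup (Fin n₂) ℂ) :
    (kronHom n₁ n₂ u : Matrix (Fin n₁ × Fin n₂) (Fin n₁ × Fin n₂) ℂ) =
      (u.1 : Matrix (Fin n₁) (Fin n₁) ℂ) ⊗ₖ (u.2 : Matrix (Fin n₂) (Fin n₂) ℂ) :=
  rfl

variable [NeZero n₁] [NeZero n₂]

theorem kronHom_mem_scalars_iff
    (u : Matrix.unitaryGroup (Fin n₁) ℂ × Matrix.unitaryGroup (Fin n₂) ℂ) :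
    kronHom n₁ n₂ u ∈ scalars (Fin n₁ × Fin n₂) ↔
      u.1 ∈ scalars (Fin n₁) ∧ u.2 ∈ scalars (Fin n₂) := by
  simp only [mem_scalars_iff, coe_kronHom_apply]
  constructor
  · rintro ⟨c, hc⟩
    exact ⟨exists_eq_smul_one_left_of_kronecker_eq_smul_one (ne_zero_of_mem_unitary u.2.2) hc,
      exists_eq_smul_one_right_of_kronecker_eq_smul_one (ne_zero_of_mem_unitary u.1.2) hc⟩
  · rintro ⟨⟨a, ha⟩, ⟨b, hb⟩⟩
    exact ⟨a * b, by rw [ha, hb, smul_kronecker, kronecker_smul, one_kronecker_one, smul_smul]⟩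

theorem comap_kronHom_scalars :
    (scalars (Fin n₁ × Fin n₂)).comap (kronHom n₁ n₂) =
      (scalars (Fin n₁)).prod (scalars (Fin n₂)) := by
  ext u
  rw [Subgroup.mem_comap, kronHom_mem_scalars_iff, Subgroup.mem_prod]

end kronHom

def mulEquivOfSurjectiveOfKerEq {G H K : Type*} [Group G] [Group H] [Group K]
    {φ : G →* H} {ψ : G →* K} (hφ : Function.Surjective φ) (hψ : Function.Surjective ψ)
    (hker : φ.ker = ψ.ker) : H ≃* K :=
  (QuotientGroup.quotientKerEquivOfSurjective φ hφ).symm.trans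
    ((QuotientGroup.quotientMulEquivOfEq hker).trans
      (QuotientGroup.quotientKerEquivOfSurjective ψ hψ))

theorem stmt9 (n₁ n₂ : ℕ) (h₂ : 2 ≤ n₂) (h₁₂ : n₂ < n₁) :
    Nonempty
      ((↥(kronHom n₁ n₂).range ⧸
          (scalars (Fin n₁ × Fin n₂)).comap (kronHom n₁ n₂).range.subtype) ≃*
        (PU n₁ × PU n₂)) := by
  have : NeZero n₁ := ⟨by omega⟩
  have : NeZero n₂ := ⟨by omega⟩
  let φ := (QuotientGroup.mk' ((scalars (Fin n₁ × Fin n₂)).comap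
    (kronHom n₁ n₂).range.subtype)).comp (kronHom n₁ n₂).rangeRestrict
  let ψ := (QuotientGroup.mk' (scalars (Fin n₁))).prodMap (QuotientGroup.mk' (scalars (Fin n₂)))
  have hker : φ.ker = ψ.ker := by
    rw [← MonoidHom.comap_ker, QuotientGroup.ker_mk', Subgroup.comap_comap,
      MonoidHom.subtype_comp_rangeRestrict, MonoidHom.ker_prodMap, QuotientGroup.ker_mk',
      QuotientGroup.ker_mk', comap_kronHom_scalars]
  exact ⟨mulEquivOfSurjectiveOfKerEq (φ := φ) (ψ := ψ)
    ((QuotientGroup.mk'_surjective _).comp (kronHom n₁ n₂).rangeRestrict_surjective)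
    ((QuotientGroup.mk'_surjective _).prodMap (QuotientGroup.mk'_surjective _)) hker⟩
end
end

section
/- Let n₁, n₂ ≥ 1. (i) If g₁ ∈ GL(n₁, ℂ) and g₂ ∈ GL(n₂, ℂ) are such that the Kronecker product g₁ ⊗ g₂ is unitary, then there exist a real number ρ > 0 and unitary matrices u₁ ∈ U(n₁), u₂ ∈ U(n₂) with g₁ = ρ u₁ and g₂ = ρ^{−1} u₂. (ii) If ρ₁, ρ₂ > 0 with ρ₁ρ₂ = 1 and u₁ ∈ U(n₁), u₂ ∈ U(n₂) satisfy (ρ₁u₁) ⊗ (ρ₂u₂) = 1_{n₁n₂}, then there exists θ ∈ ℝ with u₁ = e^{iθ}·1_{n₁} and u₂ = e^{−iθ}·1_{n₂} (and consequently ρ₂ = ρ₁^{−1}). (Paper: Lemma 4.7 on the short exact sequence 1 → ℂ× → {ℝ⁺×U(n₁)} ×_{|det|} {ℝ⁺×U(n₂)} → 𝒰(A₁⊗A₂) → 1.) -/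
/-!
A Kronecker product `A ⊗ B` is the identity only if `A = a • 1` and `B = b • 1` with `a * b = 1`.
If `g₁ ⊗ g₂` is unitary, this applies to the Gram matrices `g₁ᴴ g₁` and `g₂ᴴ g₂`; the scalar `a` is a
diagonal entry of a positive semidefinite matrix, hence `a = ρ²` with `ρ > 0`, and `b = ρ⁻²`, so
`ρ⁻¹ g₁` and `ρ g₂` are unitary. In part (ii) the unitaries themselves are scalar, and a scalar
unitary matrix is a complex number of modulus one, i.e. `exp (θ i)`.
-/

open Matrix
open scoped Kronecker ComplexOrder

namespace Matrix

variable {m n : Type*} [DecidableEq m] [DecidableEq n]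

theorem exists_smul_one_of_kronecker_eq_one {R : Type*} [CommSemiring R] [Nonempty m] [Nonempty n]
    {A : Matrix m m R} {B : Matrix n n R} (h : A ⊗ₖ B = 1) :
    ∃ a b : R, a * b = 1 ∧ A = a • 1 ∧ B = b • 1 := by
  have entry (i k : m) (j l : n) : A i k * B j l = if i = k ∧ j = l then 1 else 0 := by
    simpa [one_apply, Prod.ext_iff] using congr_fun₂ h (i, j) (k, l)
  obtain ⟨i₀⟩ := ‹Nonempty m›
  obtain ⟨j₀⟩ := ‹Nonempty n›
  have hab : A i₀ i₀ * B j₀ j₀ = 1 := by simpa using entry i₀ i₀ j₀ j₀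
  refine ⟨A i₀ i₀, B j₀ j₀, hab, ?_, ?_⟩
  · ext i k
    calc A i k = A i k * B j₀ j₀ * A i₀ i₀ := by rw [mul_assoc, mul_comm (B j₀ j₀), hab, mul_one]
      _ = _ := by by_cases hik : i = k <;> simp [entry, hik]
  · ext j l
    calc B j l = A i₀ i₀ * B j l * B j₀ j₀ := by rw [mul_comm (A i₀ i₀), mul_assoc, hab, mul_one]
      _ = _ := by by_cases hjl : j = l <;> simp [entry, hjl, mul_comm]

theorem smul_one_mem_unitaryGroup_iff {R : Type*} [CommRing R] [StarRing R] [Fintype n]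
    [Nonempty n] {a : R} : a • (1 : Matrix n n R) ∈ unitaryGroup n R ↔ a ∈ unitary R := by
  rw [mem_unitaryGroup_iff', Unitary.mem_iff_star_mul_self, star_smul, star_one,
    smul_mul_smul_comm, one_mul]
  obtain ⟨i⟩ := ‹Nonempty n›
  exact ⟨fun h => by simpa using congr_fun₂ h i i, fun h => by rw [h, one_smul]⟩

variable {𝕜 : Type*} [RCLike 𝕜]

theorem exists_mem_unitaryGroup_eq_smul [Fintype n] {g : Matrix n n 𝕜} {r : ℝ} (hr : r ≠ 0)
    (h : gᴴ * g = ((r : 𝕜) ^ 2) • 1) : ∃ u ∈ unitaryGroup n 𝕜, g = (r : 𝕜) • u := by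
  have hr' : (r : 𝕜) ≠ 0 := RCLike.ofReal_ne_zero.mpr hr
  refine ⟨(r : 𝕜)⁻¹ • g, ?_, by rw [smul_smul, mul_inv_cancel₀ hr', one_smul]⟩
  have hscalar : (r : 𝕜)⁻¹ * (r : 𝕜)⁻¹ * (r : 𝕜) ^ 2 = 1 := by field_simp
  rw [mem_unitaryGroup_iff', star_smul, star_eq_conjTranspose, smul_mul_smul_comm, h, smul_smul,
    star_inv₀, RCLike.star_def, RCLike.conj_ofReal, hscalar, one_smul]

theorem exists_pos_mem_unitaryGroup_of_kronecker_mem_unitaryGroup [Fintype m] [Fintype n]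
    [Nonempty m] [Nonempty n] {g₁ : Matrix m m 𝕜} {g₂ : Matrix n n 𝕜}
    (h : g₁ ⊗ₖ g₂ ∈ unitaryGroup (m × n) 𝕜) :
    ∃ ρ : ℝ, 0 < ρ ∧ ∃ u₁ ∈ unitaryGroup m 𝕜, ∃ u₂ ∈ unitaryGroup n 𝕜,
      g₁ = (ρ : 𝕜) • u₁ ∧ g₂ = (ρ : 𝕜)⁻¹ • u₂ := by
  have hgram : (g₁ᴴ * g₁) ⊗ₖ (g₂ᴴ * g₂) = 1 := by
    rw [mul_kronecker_mul, ← conjTranspose_kronecker, ← star_eq_conjTranspose]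
    exact mem_unitaryGroup_iff'.mp h
  obtain ⟨a, b, hab, ha, hb⟩ := exists_smul_one_of_kronecker_eq_one hgram
  obtain ⟨i⟩ := ‹Nonempty m›
  have ha_pos : 0 < a := by
    have : 0 ≤ (g₁ᴴ * g₁) i i := (posSemidef_conjTranspose_mul_self g₁).diag_nonneg
    simp only [ha, smul_apply, one_apply_eq, smul_eq_mul, mul_one] at this
    exact this.lt_of_ne (left_ne_zero_of_mul_eq_one hab).symm
  obtain ⟨r, hr, rfl⟩ := RCLike.pos_iff_exists_ofReal.mp ha_pos
  have hρ : 0 < √r := Real.sqrt_pos.mpr hr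
  have ha' : (r : 𝕜) = (√r : 𝕜) ^ 2 := by
    rw [← RCLike.ofReal_pow, Real.sq_sqrt hr.le]
  have hb' : b = (((√r)⁻¹ : ℝ) : 𝕜) ^ 2 := by
    rw [← RCLike.ofReal_pow, inv_pow, Real.sq_sqrt hr.le, RCLike.ofReal_inv]
    exact eq_inv_of_mul_eq_one_right hab
  obtain ⟨u₁, hu₁, rfl⟩ := exists_mem_unitaryGroup_eq_smul hρ.ne' (ha' ▸ ha)
  obtain ⟨u₂, hu₂, rfl⟩ := exists_mem_unitaryGroup_eq_smul (inv_ne_zero hρ.ne') (hb' ▸ hb)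
  exact ⟨√r, hρ, u₁, hu₁, u₂, hu₂, rfl, by rw [RCLike.ofReal_inv]⟩

theorem exists_exp_smul_one_of_kronecker_eq_one [Fintype m] [Nonempty m] [Nonempty n]
    {u₁ : Matrix m m ℂ} {u₂ : Matrix n n ℂ} (hu₁ : u₁ ∈ unitaryGroup m ℂ) (h : u₁ ⊗ₖ u₂ = 1) :
    ∃ θ : ℝ, u₁ = Complex.exp (θ * Complex.I) • 1 ∧
      u₂ = Complex.exp (-(θ * Complex.I)) • 1 := by
  obtain ⟨a, b, hab, rfl, rfl⟩ := exists_smul_one_of_kronecker_eq_one h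
  obtain ⟨θ, rfl⟩ := (Complex.norm_eq_one_iff a).mp
    (CStarRing.norm_of_mem_unitary (smul_one_mem_unitaryGroup_iff.mp hu₁))
  exact ⟨θ, rfl, by rw [Complex.exp_neg, eq_inv_of_mul_eq_one_right hab]⟩

end Matrix

theorem stmt11 (n₁ n₂ : ℕ) (h₁ : 1 ≤ n₁) (h₂ : 1 ≤ n₂) :
    (∀ (g₁ : Matrix (Fin n₁) (Fin n₁) ℂ) (g₂ : Matrix (Fin n₂) (Fin n₂) ℂ),
      IsUnit g₁ → IsUnit g₂ →
      g₁ ⊗ₖ g₂ ∈ Matrix.unitaryGroup (Fin n₁ × Fin n₂) ℂ →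
      ∃ ρ : ℝ, 0 < ρ ∧
        ∃ u₁ ∈ Matrix.unitaryGroup (Fin n₁) ℂ, ∃ u₂ ∈ Matrix.unitaryGroup (Fin n₂) ℂ,
          g₁ = (ρ : ℂ) • u₁ ∧ g₂ = ((ρ : ℂ))⁻¹ • u₂)
    ∧ (∀ (ρ₁ ρ₂ : ℝ), 0 < ρ₁ → 0 < ρ₂ → ρ₁ * ρ₂ = 1 →
        ∀ u₁ ∈ Matrix.unitaryGroup (Fin n₁) ℂ, ∀ u₂ ∈ Matrix.unitaryGroup (Fin n₂) ℂ,
          ((ρ₁ : ℂ) • u₁) ⊗ₖ ((ρ₂ : ℂ) • u₂) = 1 →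
          (∃ θ : ℝ, u₁ = Complex.exp (θ * Complex.I) • 1 ∧
              u₂ = Complex.exp (-(θ * Complex.I)) • 1) ∧
            ρ₂ = ρ₁⁻¹) := by
  have : Nonempty (Fin n₁) := Fin.pos_iff_nonempty.mp h₁
  have : Nonempty (Fin n₂) := Fin.pos_iff_nonempty.mp h₂
  refine ⟨fun g₁ g₂ _ _ h => exists_pos_mem_unitaryGroup_of_kronecker_mem_unitaryGroup h, ?_⟩
  intro ρ₁ ρ₂ _ _ hρ u₁ hu₁ u₂ _ h
  rw [smul_kronecker, kronecker_smul, smul_smul, ← Complex.ofReal_mul, hρ, Complex.ofReal_one,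
    one_smul] at h
  exact ⟨exists_exp_smul_one_of_kronecker_eq_one hu₁ h, eq_inv_of_mul_eq_one_right hρ⟩
end

section
/- Let n₁, n₂ ≥ 2. (i) If u₁ ∈ U(n₁) and u₂ ∈ U(n₂) satisfy det(u₁)^{n₂}·det(u₂)^{n₁} = 1 and u₁ ⊗ u₂ = 1_{n₁n₂}, then there exists λ ∈ ℂ with |λ| = 1, u₁ = λ·1_{n₁} and u₂ = λ^{−1}·1_{n₂}. (ii) If g₁ ∈ GL(n₁, ℂ) and g₂ ∈ GL(n₂, ℂ) are such that g₁ ⊗ g₂ is unitary and det(g₁)^{n₂}·det(g₂)^{n₁} = 1, then there exist unitaries u₁ ∈ U(n₁) and u₂ ∈ U(n₂) with det(u₁)^{n₂}·det(u₂)^{n₁} = 1 and g₁ ⊗ g₂ = u₁ ⊗ u₂. (Paper: Lemma 5.2 on the short exact sequence 1 → U(1) → U(n₁) ×_{det} U(n₂) → 𝒮𝒰(A₁⊗A₂) → 1.) -/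
/-!
Comparing entries in `A ⊗ₖ B = 1` forces `A = c • 1` and `B = c⁻¹ • 1`. For (ii), unitarity of
`g₁ ⊗ₖ g₂` gives `(g₁ g₁ᴴ) ⊗ₖ (g₂ g₂ᴴ) = 1`, so `g₁ g₁ᴴ = d • 1` and `g₂ g₂ᴴ = d⁻¹ • 1`, where
`d > 0` as a diagonal entry of a positive semidefinite matrix. Then `u₁ = (√d)⁻¹ • g₁` and
`u₂ = √d • g₂` are unitary, and the opposite scalings cancel both in `u₁ ⊗ₖ u₂` and in
`det u₁ ^ n₂ * det u₂ ^ n₁`.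
-/

open Matrix
open scoped Kronecker

namespace Matrix

theorem exists_eq_smul_one_of_kronecker_eq_one {m n K : Type*} [DecidableEq m] [DecidableEq n]
    [Field K] [Nonempty m] [Nonempty n] {A : Matrix m m K} {B : Matrix n n K} (h : A ⊗ₖ B = 1) :
    ∃ c : K, c ≠ 0 ∧ A = c • 1 ∧ B = c⁻¹ • 1 := by
  obtain ⟨i₀⟩ := ‹Nonempty m›
  obtain ⟨j₀⟩ := ‹Nonempty n›
  have entry (i k : m) (j l : n) :
      A i k * B j l = (1 : Matrix m m K) i k * (1 : Matrix n n K) j l := by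
    rw [← one_kronecker_one] at h
    simpa using congrFun (congrFun h (i, j)) (k, l)
  have hAB : A i₀ i₀ * B j₀ j₀ = 1 := by simpa using entry i₀ i₀ j₀ j₀
  have hB : B j₀ j₀ = (A i₀ i₀)⁻¹ := eq_inv_of_mul_eq_one_right hAB
  have ha : A i₀ i₀ ≠ 0 := left_ne_zero_of_mul_eq_one hAB
  refine ⟨A i₀ i₀, ha, ?_, ?_⟩
  · ext i k
    have := entry i k j₀ j₀
    rw [hB, one_apply_eq, mul_one] at this
    rw [smul_apply, smul_eq_mul, ← this]
    field_simp
  · ext j l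
    have := entry i₀ i₀ j l
    rw [one_apply_eq, one_mul] at this
    rw [smul_apply, smul_eq_mul, ← this]
    field_simp

theorem inv_smul_kronecker_smul {m n K : Type*} [Field K] {A : Matrix m m K} {B : Matrix n n K}
    {c : K} (hc : c ≠ 0) : (c⁻¹ • A) ⊗ₖ (c • B) = A ⊗ₖ B := by
  rw [smul_kronecker, kronecker_smul, smul_smul, inv_mul_cancel₀ hc, one_smul]

variable {m n : Type*} [Fintype m] [Fintype n] [DecidableEq m] [DecidableEq n]

theorem mem_unitary_of_smul_one_mem_unitaryGroup {α : Type*} [CommRing α] [StarRing α]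
    [Nonempty n] {c : α} (h : c • (1 : Matrix n n α) ∈ unitaryGroup n α) : c ∈ unitary α := by
  obtain ⟨i⟩ := ‹Nonempty n›
  rw [mem_unitaryGroup_iff', star_smul, star_one, smul_mul_smul_comm, one_mul] at h
  rw [Unitary.mem_iff_star_mul_self]
  simpa using congrFun (congrFun h i) i

theorem mul_star_kronecker_mul_star_eq_one {α : Type*} [CommRing α] [StarRing α]
    {A : Matrix m m α} {B : Matrix n n α} (h : A ⊗ₖ B ∈ unitaryGroup (m × n) α) :
    (A * star A) ⊗ₖ (B * star B) = 1 := by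
  rw [mul_kronecker_mul, star_eq_conjTranspose, star_eq_conjTranspose, ← conjTranspose_kronecker,
    ← star_eq_conjTranspose, ← mem_unitaryGroup_iff]
  exact h

theorem inv_smul_mem_unitaryGroup {K : Type*} [Field K] [StarRing K] {A : Matrix n n K} {c : K}
    (hc : star c = c) (hc₀ : c ≠ 0) (h : A * star A = c ^ 2 • 1) :
    c⁻¹ • A ∈ unitaryGroup n K := by
  rw [mem_unitaryGroup_iff, star_smul, smul_mul_smul_comm, h, star_inv₀, hc, smul_smul]
  field_simp
  simp

theorem det_inv_smul_pow_mul_det_smul_pow {K : Type*} [Field K] {A : Matrix m m K}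
    {B : Matrix n n K} {c : K} (hc : c ≠ 0) :
    (c⁻¹ • A).det ^ Fintype.card n * (c • B).det ^ Fintype.card m
      = A.det ^ Fintype.card n * B.det ^ Fintype.card m := by
  rw [det_smul, det_smul, mul_pow, mul_pow, ← pow_mul, ← pow_mul, inv_pow,
    mul_comm (Fintype.card n)]
  field_simp

open scoped ComplexOrder in
theorem exists_smul_mem_unitaryGroup_of_kronecker_mem_unitaryGroup {𝕜 : Type*} [RCLike 𝕜]
    [Nonempty m] [Nonempty n] {A : Matrix m m 𝕜} {B : Matrix n n 𝕜}
    (h : A ⊗ₖ B ∈ unitaryGroup (m × n) 𝕜) :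
    ∃ c : 𝕜, c ≠ 0 ∧ c⁻¹ • A ∈ unitaryGroup m 𝕜 ∧ c • B ∈ unitaryGroup n 𝕜 := by
  obtain ⟨d, hd₀, hA, hB⟩ :=
    exists_eq_smul_one_of_kronecker_eq_one (mul_star_kronecker_mul_star_eq_one h)
  obtain ⟨i⟩ := ‹Nonempty m›
  have hd : 0 ≤ d := by
    have := (posSemidef_self_mul_conjTranspose A).diag_nonneg (i := i)
    rwa [← star_eq_conjTranspose, hA, smul_apply, one_apply_eq, smul_eq_mul, mul_one] at this
  obtain ⟨t, ht, rfl⟩ := RCLike.nonneg_iff_exists_ofReal.mp hd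
  have hsq : ((√t : ℝ) : 𝕜) ^ 2 = t := by rw [← RCLike.ofReal_pow, Real.sq_sqrt ht]
  have hr : ((√t : ℝ) : 𝕜) ≠ 0 := by
    rintro h0
    exact hd₀ (by rw [← hsq, h0, zero_pow two_ne_zero])
  refine ⟨√t, hr, inv_smul_mem_unitaryGroup (RCLike.conj_ofReal _) hr (by rw [hA, hsq]), ?_⟩
  simpa using inv_smul_mem_unitaryGroup (c := ((√t : ℝ) : 𝕜)⁻¹) (by simp [RCLike.conj_ofReal])
    (inv_ne_zero hr) (by rw [hB, inv_pow, hsq])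

end Matrix

theorem stmt12 (n₁ n₂ : ℕ) (h₁ : 2 ≤ n₁) (h₂ : 2 ≤ n₂) :
    (∀ u₁ ∈ Matrix.unitaryGroup (Fin n₁) ℂ, ∀ u₂ ∈ Matrix.unitaryGroup (Fin n₂) ℂ,
      u₁.det ^ n₂ * u₂.det ^ n₁ = 1 → u₁ ⊗ₖ u₂ = 1 →
      ∃ lam : ℂ, ‖lam‖ = 1 ∧ u₁ = lam • 1 ∧ u₂ = lam⁻¹ • 1)
    ∧ (∀ (g₁ : Matrix (Fin n₁) (Fin n₁) ℂ) (g₂ : Matrix (Fin n₂) (Fin n₂) ℂ),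
        IsUnit g₁ → IsUnit g₂ →
        g₁ ⊗ₖ g₂ ∈ Matrix.unitaryGroup (Fin n₁ × Fin n₂) ℂ →
        g₁.det ^ n₂ * g₂.det ^ n₁ = 1 →
        ∃ u₁ ∈ Matrix.unitaryGroup (Fin n₁) ℂ, ∃ u₂ ∈ Matrix.unitaryGroup (Fin n₂) ℂ,
          u₁.det ^ n₂ * u₂.det ^ n₁ = 1 ∧ g₁ ⊗ₖ g₂ = u₁ ⊗ₖ u₂) := by
  have : NeZero n₁ := ⟨by omega⟩
  have : NeZero n₂ := ⟨by omega⟩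
  constructor
  · intro u₁ hu₁ u₂ _ _ hu
    obtain ⟨c, -, rfl, rfl⟩ := exists_eq_smul_one_of_kronecker_eq_one hu
    exact ⟨c, CStarRing.norm_of_mem_unitary (mem_unitary_of_smul_one_mem_unitaryGroup hu₁),
      rfl, rfl⟩
  · intro g₁ g₂ _ _ hg hdet
    obtain ⟨c, hc, hu₁, hu₂⟩ := exists_smul_mem_unitaryGroup_of_kronecker_mem_unitaryGroup hg
    refine ⟨_, hu₁, _, hu₂, ?_, (inv_smul_kronecker_smul hc).symm⟩
    simpa only [Fintype.card_fin, hdet] using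
      det_inv_smul_pow_mul_det_smul_pow (A := g₁) (B := g₂) hc
end

section
/- Let n₁, n₂ ≥ 2 and let ξ : U(1) × SU(n₁) × SU(n₂) → U(n₁) × U(n₂) be the group homomorphism ξ(z, m₁, m₂) = (z·m₁, z^{−1}·m₂). Then: (i) ξ(z, m₁, m₂) = (1_{n₁}, 1_{n₂}) if and only if z^{gcd(n₁,n₂)} = 1, m₁ = z^{−1}·1_{n₁} and m₂ = z·1_{n₂}; hence the kernel of ξ is the image of the group μ_{gcd(n₁,n₂)} of gcd(n₁,n₂)-th roots of unity under the injective homomorphism λ ↦ (λ, λ^{−1}·1_{n₁}, λ·1_{n₂}). (ii) A pair (u₁, u₂) ∈ U(n₁) × U(n₂) with det(u₁)^{n₂}·det(u₂)^{n₁} = 1 lies in the image of ξ if and only if there exists λ ∈ ℂ with |λ| = 1, det(u₁) = λ^{n₁} and det(u₂) = λ^{−n₂}. (Paper: Lemma 5.3 on the exact sequence 1 → μ_{gcd(n₁,n₂)} → U(1)×SU(n₁)×SU(n₂) → U(n₁)×_{det}U(n₂) → μ_{n₁n₂} → 1.) -/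
open Matrix

noncomputable section

/-! The kernel of ξ consists of scalars: `z • m₁ = 1` forces `m₁ = z⁻¹ • 1`, and then `det m₁ = 1`
reads `z ^ n₁ = 1`; likewise `z ^ n₂ = 1`, so `z ^ gcd n₁ n₂ = 1`. For the image, taking
determinants shows that `λ = z` is a witness; conversely, given `λ`, the matrices `λ⁻¹ • u₁` and
`λ • u₂` are special unitary and `ξ(λ, λ⁻¹ • u₁, λ • u₂) = (u₁, u₂)`. -/

lemma RCLike.mem_unitary_of_norm_eq_one {𝕜 : Type*} [RCLike 𝕜] {z : 𝕜} (hz : ‖z‖ = 1) :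
    z ∈ unitary 𝕜 := by
  rw [Unitary.mem_iff_star_mul_self, RCLike.star_def, RCLike.conj_mul, hz]
  norm_num

namespace Matrix

variable {m n : Type*} [Fintype m] [DecidableEq m] [Fintype n] [DecidableEq n]

section Field

variable {K : Type*} [Field K]

lemma det_inv_smul_eq_one {z : K} (hz : z ≠ 0) {u : Matrix n n K}
    (hu : u.det = z ^ Fintype.card n) : (z⁻¹ • u).det = 1 := by
  rw [det_smul, hu, inv_pow, inv_mul_cancel₀ (pow_ne_zero _ hz)]

theorem smul_eq_one_and_inv_smul_eq_one_iff {z : K} (hz : z ≠ 0)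
    {m₁ : Matrix m m K} {m₂ : Matrix n n K} (hd₁ : m₁.det = 1) (hd₂ : m₂.det = 1) :
    (z • m₁ = 1 ∧ z⁻¹ • m₂ = 1) ↔
      (z ^ Nat.gcd (Fintype.card m) (Fintype.card n) = 1 ∧ m₁ = z⁻¹ • 1 ∧ m₂ = z • 1) := by
  constructor
  · rintro ⟨e₁, e₂⟩
    have hpow₁ : z ^ Fintype.card m = 1 := by
      simpa [det_smul, hd₁] using congrArg det e₁
    have hpow₂ : z ^ Fintype.card n = 1 := by
      simpa [det_smul, hd₂] using congrArg det e₂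
    exact ⟨pow_gcd_eq_one.2 ⟨hpow₁, hpow₂⟩, (eq_inv_smul_iff₀ hz).2 e₁,
      (inv_smul_eq_iff₀ hz).1 e₂⟩
  · rintro ⟨-, rfl, rfl⟩
    exact ⟨(eq_inv_smul_iff₀ hz).1 rfl, (inv_smul_eq_iff₀ hz).2 rfl⟩

end Field

variable {𝕜 : Type*} [RCLike 𝕜]

theorem exists_smul_eq_and_inv_smul_eq_iff {u₁ : Matrix m m 𝕜} {u₂ : Matrix n n 𝕜}
    (hu₁ : u₁ ∈ unitaryGroup m 𝕜) (hu₂ : u₂ ∈ unitaryGroup n 𝕜) :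
    (∃ (z : 𝕜) (m₁ : Matrix m m 𝕜) (m₂ : Matrix n n 𝕜),
        ‖z‖ = 1 ∧ m₁ ∈ unitaryGroup m 𝕜 ∧ m₁.det = 1 ∧ m₂ ∈ unitaryGroup n 𝕜 ∧ m₂.det = 1 ∧
        u₁ = z • m₁ ∧ u₂ = z⁻¹ • m₂) ↔
      ∃ lam : 𝕜, ‖lam‖ = 1 ∧
        u₁.det = lam ^ (Fintype.card m : ℤ) ∧ u₂.det = lam ^ (-(Fintype.card n : ℤ)) := by
  constructor
  · rintro ⟨z, m₁, m₂, hz, -, hd₁, -, hd₂, rfl, rfl⟩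
    exact ⟨z, hz, by simp [hd₁], by simp [hd₂]⟩
  · rintro ⟨lam, hlam, hd₁, hd₂⟩
    have hlam₀ : lam ≠ 0 := norm_ne_zero_iff.1 (by simp [hlam])
    have hlam_inv : ‖lam⁻¹‖ = 1 := by rw [norm_inv, hlam, inv_one]
    have hd₂' : (lam⁻¹⁻¹ • u₂).det = 1 :=
      det_inv_smul_eq_one (inv_ne_zero hlam₀) (by rw [hd₂, _root_.zpow_neg, zpow_natCast, inv_pow])
    rw [inv_inv] at hd₂'
    exact ⟨lam, lam⁻¹ • u₁, lam • u₂, hlam,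
      Unitary.smul_mem_of_mem (RCLike.mem_unitary_of_norm_eq_one hlam_inv) hu₁,
      det_inv_smul_eq_one hlam₀ (by rw [hd₁, zpow_natCast]),
      Unitary.smul_mem_of_mem (RCLike.mem_unitary_of_norm_eq_one hlam) hu₂, hd₂',
      (smul_inv_smul₀ hlam₀ u₁).symm, (inv_smul_smul₀ hlam₀ u₂).symm⟩

end Matrix

theorem stmt13_general (n₁ n₂ : ℕ) :
    -- (i) characterization of the kernel of ξ(z, m₁, m₂) = (z m₁, z⁻¹ m₂)
    (∀ (z : ℂ) (m₁ : Matrix (Fin n₁) (Fin n₁) ℂ) (m₂ : Matrix (Fin n₂) (Fin n₂) ℂ),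
      ‖z‖ = 1 →
      m₁ ∈ Matrix.unitaryGroup (Fin n₁) ℂ → m₁.det = 1 →
      m₂ ∈ Matrix.unitaryGroup (Fin n₂) ℂ → m₂.det = 1 →
      ((z • m₁ = 1 ∧ z⁻¹ • m₂ = 1) ↔
        (z ^ Nat.gcd n₁ n₂ = 1 ∧ m₁ = z⁻¹ • 1 ∧ m₂ = z • 1)))
    -- the map λ ↦ (λ, λ⁻¹·1, λ·1) is injective on the gcd-th roots of unity
    ∧ (∀ lam lam' : ℂ, lam ^ Nat.gcd n₁ n₂ = 1 → lam' ^ Nat.gcd n₁ n₂ = 1 →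
        (lam, lam⁻¹ • (1 : Matrix (Fin n₁) (Fin n₁) ℂ),
            lam • (1 : Matrix (Fin n₂) (Fin n₂) ℂ)) =
          (lam', lam'⁻¹ • 1, lam' • 1) →
        lam = lam')
    -- (ii) characterization of the image of ξ among pairs in U(n₁) ×_det U(n₂)
    ∧ (∀ u₁ ∈ Matrix.unitaryGroup (Fin n₁) ℂ, ∀ u₂ ∈ Matrix.unitaryGroup (Fin n₂) ℂ,
        u₁.det ^ n₂ * u₂.det ^ n₁ = 1 →
        ((∃ (z : ℂ) (m₁ : Matrix (Fin n₁) (Fin n₁) ℂ) (m₂ : Matrix (Fin n₂) (Fin n₂) ℂ),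
            ‖z‖ = 1 ∧
            m₁ ∈ Matrix.unitaryGroup (Fin n₁) ℂ ∧ m₁.det = 1 ∧
            m₂ ∈ Matrix.unitaryGroup (Fin n₂) ℂ ∧ m₂.det = 1 ∧
            u₁ = z • m₁ ∧ u₂ = z⁻¹ • m₂) ↔
          (∃ lam : ℂ, ‖lam‖ = 1 ∧
            u₁.det = lam ^ (n₁ : ℤ) ∧ u₂.det = lam ^ (-(n₂ : ℤ))))) := by
  refine ⟨fun z m₁ m₂ hz _ hd₁ _ hd₂ => ?_, fun _ _ _ _ h => congrArg Prod.fst h,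
    fun u₁ hu₁ u₂ hu₂ _ => ?_⟩
  · have hz₀ : z ≠ 0 := norm_ne_zero_iff.1 (by simp [hz])
    simpa only [Fintype.card_fin] using smul_eq_one_and_inv_smul_eq_one_iff hz₀ hd₁ hd₂
  · simpa only [Fintype.card_fin] using exists_smul_eq_and_inv_smul_eq_iff hu₁ hu₂

theorem stmt13 (n₁ n₂ : ℕ) (h₁ : 2 ≤ n₁) (h₂ : 2 ≤ n₂) :
    -- (i) characterization of the kernel of ξ(z, m₁, m₂) = (z m₁, z⁻¹ m₂)
    (∀ (z : ℂ) (m₁ : Matrix (Fin n₁) (Fin n₁) ℂ) (m₂ : Matrix (Fin n₂) (Fin n₂) ℂ),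
      ‖z‖ = 1 →
      m₁ ∈ Matrix.unitaryGroup (Fin n₁) ℂ → m₁.det = 1 →
      m₂ ∈ Matrix.unitaryGroup (Fin n₂) ℂ → m₂.det = 1 →
      ((z • m₁ = 1 ∧ z⁻¹ • m₂ = 1) ↔
        (z ^ Nat.gcd n₁ n₂ = 1 ∧ m₁ = z⁻¹ • 1 ∧ m₂ = z • 1)))
    -- the map λ ↦ (λ, λ⁻¹·1, λ·1) is injective on the gcd-th roots of unity
    ∧ (∀ lam lam' : ℂ, lam ^ Nat.gcd n₁ n₂ = 1 → lam' ^ Nat.gcd n₁ n₂ = 1 →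
        (lam, lam⁻¹ • (1 : Matrix (Fin n₁) (Fin n₁) ℂ),
            lam • (1 : Matrix (Fin n₂) (Fin n₂) ℂ)) =
          (lam', lam'⁻¹ • 1, lam' • 1) →
        lam = lam')
    -- (ii) characterization of the image of ξ among pairs in U(n₁) ×_det U(n₂)
    ∧ (∀ u₁ ∈ Matrix.unitaryGroup (Fin n₁) ℂ, ∀ u₂ ∈ Matrix.unitaryGroup (Fin n₂) ℂ,
        u₁.det ^ n₂ * u₂.det ^ n₁ = 1 →
        ((∃ (z : ℂ) (m₁ : Matrix (Fin n₁) (Fin n₁) ℂ) (m₂ : Matrix (Fin n₂) (Fin n₂) ℂ),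
            ‖z‖ = 1 ∧
            m₁ ∈ Matrix.unitaryGroup (Fin n₁) ℂ ∧ m₁.det = 1 ∧
            m₂ ∈ Matrix.unitaryGroup (Fin n₂) ℂ ∧ m₂.det = 1 ∧
            u₁ = z • m₁ ∧ u₂ = z⁻¹ • m₂) ↔
          (∃ lam : ℂ, ‖lam‖ = 1 ∧
            u₁.det = lam ^ (n₁ : ℤ) ∧ u₂.det = lam ^ (-(n₂ : ℤ))))) :=
  stmt13_general n₁ n₂
end
end

section
/- Let m ≥ 1, let L_0, …, L_3 and A_0, …, A_3 be matrices in M_m(ℂ), and let u ∈ U(m). Define the gauge-transformed potentials A^u_μ = u A_μ u* + u (L_μ u* − u* L_μ) and the field strength matrices 𝖥_{μν}(A) = [L_μ + A_μ, L_ν + A_ν] (matrix commutator). Then for all μ, ν ∈ {0,1,2,3}: 𝖥_{μν}(A^u) = u · 𝖥_{μν}(A) · u*, i.e. the field strength matrix transforms by conjugation (by the adjoint action Ad_u) under gauge transformations. (Paper: Proposition 6.3, gauge covariance of the field strength.) -/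
open Matrix

noncomputable section

/-- Field strength matrix `𝖥_{μν}(A) = [L_μ + A_μ, L_ν + A_ν]`. -/
def fieldStrengthMatrix {m : ℕ} (L A : Fin 4 → Matrix (Fin m) (Fin m) ℂ) (μ ν : Fin 4) :
    Matrix (Fin m) (Fin m) ℂ :=
  (L μ + A μ) * (L ν + A ν) - (L ν + A ν) * (L μ + A μ)

/-!
The gauge transformation is exactly what makes the covariant operator `L + A` transform by
conjugation, `L + Aᵘ = u (L + A) u*`; conjugation by a unitary is a ring automorphism, so it
commutes with commutators.
-/

namespace Unitary

variable {R : Type*} [Ring R] [StarMul R]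

def gaugeTransform (u L A : R) : R :=
  u * A * star u + u * (L * star u - star u * L)

theorem add_gaugeTransform {u : R} (hu : u ∈ unitary R) (L A : R) :
    L + gaugeTransform u L A = u * (L + A) * star u :=
  calc L + gaugeTransform u L A = u * (L + A) * star u + L - u * star u * L := by
        unfold gaugeTransform; noncomm_ring
    _ = u * (L + A) * star u := by rw [mul_star_self_of_mem hu, one_mul, add_sub_cancel_right]

theorem conj_commutator {u : R} (hu : u ∈ unitary R) (x y : R) :
    u * x * star u * (u * y * star u) - u * y * star u * (u * x * star u) =
      u * (x * y - y * x) * star u := by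
  simp only [← conjStarAlgAut_apply (S := ℤ) ⟨u, hu⟩, ← map_mul, ← map_sub]

end Unitary

theorem stmt16_general (m : ℕ)
    (L A : Fin 4 → Matrix (Fin m) (Fin m) ℂ)
    (u : Matrix (Fin m) (Fin m) ℂ) (hu : u ∈ Matrix.unitaryGroup (Fin m) ℂ)
    (Au : Fin 4 → Matrix (Fin m) (Fin m) ℂ)
    (hAu : ∀ μ, Au μ = u * A μ * star u + u * (L μ * star u - star u * L μ)) :
    ∀ μ ν : Fin 4,
      fieldStrengthMatrix L Au μ ν = u * fieldStrengthMatrix L A μ ν * star u := by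
  have hcov : ∀ μ, L μ + Au μ = u * (L μ + A μ) * star u := fun μ => by
    rw [hAu μ]
    exact Unitary.add_gaugeTransform hu (L μ) (A μ)
  intro μ ν
  simp only [fieldStrengthMatrix, hcov]
  exact Unitary.conj_commutator hu _ _

theorem stmt16 (m : ℕ) (hm : 1 ≤ m)
    (L A : Fin 4 → Matrix (Fin m) (Fin m) ℂ)
    (u : Matrix (Fin m) (Fin m) ℂ) (hu : u ∈ Matrix.unitaryGroup (Fin m) ℂ)
    (Au : Fin 4 → Matrix (Fin m) (Fin m) ℂ)
    (hAu : ∀ μ, Au μ = u * A μ * star u + u * (L μ * star u - star u * L μ)) :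
    ∀ μ ν : Fin 4,
      fieldStrengthMatrix L Au μ ν = u * fieldStrengthMatrix L A μ ν * star u :=
  stmt16_general m L A u hu Au hAu
end
end

section
/- Assume k = 4. Let γ_{ch} = σ(η) γ^0 γ^1 γ^2 γ^3 with σ(η) = (−i)^{(q−p)(q−p+1)/2}, and assume γ_{ch}² = 1_4. Let 𝖪_μ, 𝖠_μ ∈ M_m(ℂ), define 𝔡_μ = {𝖪_μ + 𝖠_μ, ·}_{e_μ} on M_m(ℂ) and θ = Σ_{μ,ν} η^{μν} 𝔡_μ ∘ 𝔡_ν, let Φ be any linear operator on M_m(ℂ), and set D_ω = Σ_μ γ^μ ⊗ 𝔡_μ + γ_{ch} ⊗ Φ on ℂ⁴ ⊗ M_m(ℂ). Then (1/4)·Tr(D_ω²) = Tr(θ + Φ∘Φ), where the left-hand trace is the trace of the linear endomorphism D_ω² of ℂ⁴ ⊗ M_m(ℂ) and the right-hand trace is the trace of a linear endomorphism of M_m(ℂ). (Paper: Lemma 6.4, trace of the square of the fully fluctuated Dirac operator.) -/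
/-! Identifying `ℂ⁴ ⊗ M_m(ℂ)` with `Fin 4 → M_m(ℂ)`, `matOp g T` is `g ⊗ T`, whose trace is
`tr g · Tr T`. In the square of `D_ω` the cross terms carry `γ^μ γ_ch` or `γ_ch γ^μ`, which are
traceless because `γ_ch`, a multiple of a product of four pairwise anticommuting generators,
anticommutes with every `γ^μ`; the Clifford relation gives `tr (γ^μ γ^ν) = 4 η^{μν}`, and
`γ_ch² = 1` gives `tr (γ_ch²) = 4`. -/

open Matrix

noncomputable section

lemma matOp_eq_conj_map {k : ℕ} {V : Type*} [AddCommGroup V] [Module ℂ V]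
    (g : Matrix (Fin k) (Fin k) ℂ) (T : Module.End ℂ V) :
    matOp g T = (TensorProduct.piScalarRight ℂ ℂ V (Fin k)).conj
      (TensorProduct.map T (Matrix.toLin' g)) := by
  rw [LinearEquiv.conj_apply, LinearEquiv.eq_comp_toLinearMap_symm]
  ext x f i
  simp [matOp, Pi.single_apply, apply_ite T]

lemma trace_matOp {k : ℕ} {V : Type*} [AddCommGroup V] [Module ℂ V]
    [Module.Finite ℂ V] [Module.Free ℂ V]
    (g : Matrix (Fin k) (Fin k) ℂ) (T : Module.End ℂ V) :
    LinearMap.trace ℂ (Fin k → V) (matOp g T) = g.trace * LinearMap.trace ℂ V T := by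
  rw [matOp_eq_conj_map, LinearMap.trace_conj', LinearMap.trace_tensorProduct',
    Matrix.trace_toLin'_eq, mul_comm]

lemma matOp_mul {k : ℕ} {V : Type*} [AddCommGroup V] [Module ℂ V]
    (g h : Matrix (Fin k) (Fin k) ℂ) (T S : Module.End ℂ V) :
    matOp g T * matOp h S = matOp (g * h) (T * S) := by
  refine LinearMap.ext fun f => funext fun i => ?_
  simp only [Module.End.mul_apply, matOp, LinearMap.coe_mk, AddHom.coe_mk,
    Matrix.mul_apply, map_sum, _root_.map_smul, Finset.smul_sum, Finset.sum_smul, smul_smul]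
  rw [Finset.sum_comm]

lemma mul_prod_four_eq_neg_of_anticomm {R : Type*} [Ring R] (γ : Fin 4 → R)
    (hanti : ∀ μ ν, μ ≠ ν → γ μ * γ ν = -(γ ν * γ μ)) (μ : Fin 4) :
    γ μ * (γ 0 * γ 1 * γ 2 * γ 3) = -(γ 0 * γ 1 * γ 2 * γ 3 * γ μ) := by
  set s : Fin 4 → ℤ := fun ν => if ν = μ then 1 else -1
  have hs : ∀ ν, SemiconjBy (γ μ) (γ ν) (s ν • γ ν) := by
    intro ν
    by_cases hν : ν = μ
    · subst hν; simp [s, SemiconjBy]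
    · simp [s, hν, SemiconjBy, hanti μ ν (Ne.symm hν)]
  have hsigns : s 0 * s 1 * s 2 * s 3 = -1 := by fin_cases μ <;> decide
  have := (((hs 0).mul_right (hs 1)).mul_right (hs 2)).mul_right (hs 3)
  rw [smul_mul_smul_comm, smul_mul_smul_comm, smul_mul_smul_comm, hsigns, neg_one_zsmul] at this
  exact this.eq.trans (neg_mul _ _)

namespace Matrix

variable {n R : Type*} [Fintype n] [CommRing R] [NoZeroDivisors R] [CharZero R]

theorem trace_mul_eq_zero_of_mul_eq_neg {A B : Matrix n n R} (h : A * B = -(B * A)) :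
    (A * B).trace = 0 := by
  have := congrArg trace h
  rwa [trace_neg, trace_mul_comm B A, CharZero.eq_neg_self_iff] at this

theorem trace_mul_of_add_eq_smul_one [DecidableEq n] {A B : Matrix n n R} {c : R}
    (h : A * B + B * A = (2 * c) • 1) : (A * B).trace = Fintype.card n * c := by
  have := congrArg trace h
  rw [trace_add, trace_mul_comm B A, trace_smul, trace_one, ← two_mul, smul_eq_mul] at this
  exact mul_left_cancel₀ two_ne_zero (this.trans (by ring))

end Matrix

theorem trace_sq_sum_matOp_add_matOp {ι : Type*} [Fintype ι] [DecidableEq ι] {k : ℕ}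
    {V : Type*} [AddCommGroup V] [Module ℂ V] [Module.Finite ℂ V] [Module.Free ℂ V]
    (η : ι → ℂ) (γ : ι → Matrix (Fin k) (Fin k) ℂ)
    (hCl : ∀ μ ν, γ μ * γ ν + γ ν * γ μ = (2 * if μ = ν then η μ else 0) • 1)
    (Γ : Matrix (Fin k) (Fin k) ℂ) (hΓ : ∀ μ, γ μ * Γ = -(Γ * γ μ)) (hΓ2 : Γ * Γ = 1)
    (d : ι → Module.End ℂ V) (Φ : Module.End ℂ V) :
    LinearMap.trace ℂ (Fin k → V)
        ((∑ μ, matOp (γ μ) (d μ) + matOp Γ Φ) * (∑ μ, matOp (γ μ) (d μ) + matOp Γ Φ)) =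
      k * LinearMap.trace ℂ V
        (∑ μ, ∑ ν, (if μ = ν then η μ else 0) • (d μ * d ν) + Φ * Φ) := by
  have hexpand : (∑ μ, matOp (γ μ) (d μ) + matOp Γ Φ) * (∑ μ, matOp (γ μ) (d μ) + matOp Γ Φ) =
      ∑ μ, ∑ ν, matOp (γ μ * γ ν) (d μ * d ν) + ∑ μ, matOp (γ μ * Γ) (d μ * Φ) +
        ∑ μ, matOp (Γ * γ μ) (Φ * d μ) + matOp (Γ * Γ) (Φ * Φ) := by
    rw [add_mul, mul_add, mul_add, Finset.sum_mul_sum, Finset.sum_mul, Finset.mul_sum]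
    simp only [matOp_mul]
    abel
  have htr_γΓ : ∀ μ, (γ μ * Γ).trace = 0 := fun μ => trace_mul_eq_zero_of_mul_eq_neg (hΓ μ)
  have htr_Γγ : ∀ μ, (Γ * γ μ).trace = 0 := fun μ => by
    rw [trace_mul_comm, htr_γΓ]
  rw [hexpand]
  simp only [map_add, map_sum, _root_.map_smul, trace_matOp, htr_γΓ, htr_Γγ, hΓ2, trace_one,
    fun μ ν => trace_mul_of_add_eq_smul_one (hCl μ ν), Fintype.card_fin, zero_mul,
    Finset.sum_const_zero, add_zero, smul_eq_mul, mul_add, Finset.mul_sum, mul_assoc]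

theorem stmt17_general (p q m : ℕ)
    (e : Fin 4 → ℂ)
    (γ : Fin 4 → Matrix (Fin 4) (Fin 4) ℂ)
    (hCl : ∀ μ ν, γ μ * γ ν + γ ν * γ μ =
      (2 * if μ = ν then e μ else 0) • (1 : Matrix (Fin 4) (Fin 4) ℂ))
    (γch : Matrix (Fin 4) (Fin 4) ℂ)
    (hγch : γch =
      ((-Complex.I) ^ ((((q : ℤ) - (p : ℤ)) * ((q : ℤ) - (p : ℤ) + 1)) / 2)) •
        (γ 0 * γ 1 * γ 2 * γ 3))
    (hγch2 : γch * γch = 1)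
    (dop : Fin 4 → Module.End ℂ (Matrix (Fin m) (Fin m) ℂ))
    (θ : Module.End ℂ (Matrix (Fin m) (Fin m) ℂ))
    (hθ : θ = ∑ μ, ∑ ν, (if μ = ν then e μ else 0) • (dop μ * dop ν))
    (Φ : Module.End ℂ (Matrix (Fin m) (Fin m) ℂ))
    (Dω : Module.End ℂ (Fin 4 → Matrix (Fin m) (Fin m) ℂ))
    (hDω : Dω = (∑ μ, matOp (γ μ) (dop μ)) + matOp γch Φ) :
    (1 / 4 : ℂ) * LinearMap.trace ℂ (Fin 4 → Matrix (Fin m) (Fin m) ℂ) (Dω * Dω) =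
      LinearMap.trace ℂ (Matrix (Fin m) (Fin m) ℂ) (θ + Φ * Φ) := by
  have hanti : ∀ μ ν, μ ≠ ν → γ μ * γ ν = -(γ ν * γ μ) := fun μ ν hμν =>
    eq_neg_of_add_eq_zero_left (by simpa [hμν] using hCl μ ν)
  have hchiral : ∀ μ, γ μ * γch = -(γch * γ μ) := fun μ => by
    rw [hγch, mul_smul_comm, smul_mul_assoc, mul_prod_four_eq_neg_of_anticomm γ hanti, smul_neg]
  rw [hDω, trace_sq_sum_matOp_add_matOp e γ hCl γch hchiral hγch2, hθ]
  push_cast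
  ring

theorem stmt17 (p q m : ℕ) (hpq : p + q = 4) (hm : 1 ≤ m)
    (e : Fin 4 → ℂ) (he : ∀ μ, e μ = if (μ : ℕ) < p then 1 else -1)
    (γ : Fin 4 → Matrix (Fin 4) (Fin 4) ℂ)
    (hCl : ∀ μ ν, γ μ * γ ν + γ ν * γ μ =
      (2 * if μ = ν then e μ else 0) • (1 : Matrix (Fin 4) (Fin 4) ℂ))
    (hAdj : ∀ μ, (γ μ)ᴴ = e μ • γ μ)
    (γch : Matrix (Fin 4) (Fin 4) ℂ)
    (hγch : γch =
      ((-Complex.I) ^ ((((q : ℤ) - (p : ℤ)) * ((q : ℤ) - (p : ℤ) + 1)) / 2)) •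
        (γ 0 * γ 1 * γ 2 * γ 3))
    (hγch2 : γch * γch = 1)
    (K A : Fin 4 → Matrix (Fin m) (Fin m) ℂ)
    (dop : Fin 4 → Module.End ℂ (Matrix (Fin m) (Fin m) ℂ))
    (hdop : ∀ μ, dop μ = brkt (K μ + A μ) (e μ))
    (θ : Module.End ℂ (Matrix (Fin m) (Fin m) ℂ))
    (hθ : θ = ∑ μ, ∑ ν, (if μ = ν then e μ else 0) • (dop μ * dop ν))
    (Φ : Module.End ℂ (Matrix (Fin m) (Fin m) ℂ))
    (Dω : Module.End ℂ (Fin 4 → Matrix (Fin m) (Fin m) ℂ))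
    (hDω : Dω = (∑ μ, matOp (γ μ) (dop μ)) + matOp γch Φ) :
    (1 / 4 : ℂ) * LinearMap.trace ℂ (Fin 4 → Matrix (Fin m) (Fin m) ℂ) (Dω * Dω) =
      LinearMap.trace ℂ (Matrix (Fin m) (Fin m) ℂ) (θ + Φ * Φ) :=
  stmt17_general p q m e γ hCl γch hγch hγch2 dop θ hθ Φ Dω hDω
end
end
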